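/- arXiv:1510.04312 — 5 statements merged into one kernel-verified Lean document; each statement's English description precedes it below -/
import Mathlib

section
/- For any k ≥ 1 and any M > 1 there exist L₂, δ₂ > 0 with the following property. If A₁, A₂ : B → B are bounded linear operators and E₁, E₂ ⊂ B are k-dimensional subspaces for which |A_j| ≤ M and |(A_j|_{E_j})^{-1}| ≤ M for j = 1, 2 (where (A_j|_{E_j})^{-1} : A_j(E_j) → E_j is the inverse of the restriction), and |A₁ − A₂| ≤ δ₂ and d_H(E₁, E₂) ≤ δ₂, then | log ( det(A₁|E₁) / det(A₂|E₂) ) | ≤ L₂ ( |A₁ − A₂| + d_H(E₁, E₂) ). -/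
open MeasureTheory Filter Metric Module Submodule Set

noncomputable section

namespace BY

variable {B B' : Type*}

/-- The unit sphere of a subspace `E`. -/
def subSphere [NormedAddCommGroup B] [NormedSpace ℝ B] (E : Submodule ℝ B) : Set B :=
  {v : B | v ∈ E ∧ ‖v‖ = 1}

/-- `d_H(E, E')`: the Hausdorff distance between the unit spheres of `E` and `E'`. -/
def dH [NormedAddCommGroup B] [NormedSpace ℝ B] (E E' : Submodule ℝ B) : ℝ :=
  Metric.hausdorffDist (subSphere E) (subSphere E')

/-- The supremum of `‖π x‖` over `x ∈ S`, where `π` is the projection onto `E` along `F`. -/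
def projNormOn [NormedAddCommGroup B] [NormedSpace ℝ B] (E F : Submodule ℝ B)
    (h : IsCompl E F) (S : Set B) : ℝ :=
  sSup ((fun x => ‖(E.linearProjOfIsCompl F h x : B)‖) '' S)

/-- `|π_{E⊕F}|`: the operator norm of the projection onto `E` along `F`. -/
def projNorm [NormedAddCommGroup B] [NormedSpace ℝ B] (E F : Submodule ℝ B)
    (h : IsCompl E F) : ℝ :=
  projNormOn E F h (Metric.closedBall 0 1)

/-- `α(E, F) = inf { ‖e - f‖ : e ∈ E, ‖e‖ = 1, f ∈ F }`. -/
def alphaAngle [NormedAddCommGroup B] [NormedSpace ℝ B] (E F : Submodule ℝ B) : ℝ :=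
  sInf {r : ℝ | ∃ e ∈ E, ∃ f ∈ F, ‖e‖ = 1 ∧ r = ‖e - f‖}

/-- `ω_k`: the volume of the Euclidean unit ball in `ℝ^k`. -/
def euclideanBallVol (k : ℕ) : ENNReal :=
  volume (Metric.closedBall (0 : EuclideanSpace ℝ (Fin k)) 1)

/-- `μ` is the induced volume `m_E` on the `k`-dimensional subspace `E`: the (unique) Haar
measure on `E` assigning mass `ω_k` to the unit ball of `E`. -/
def IsInducedVolume [NormedAddCommGroup B] [NormedSpace ℝ B] [MeasurableSpace B]
    (E : Submodule ℝ B) (k : ℕ) (μ : Measure E) : Prop :=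
  Measure.IsAddHaarMeasure μ ∧ μ {v : E | ‖v‖ ≤ 1} = euclideanBallVol k

/-- `det(A|E)`, computed with respect to induced volumes `μE` on `E` and `μF` on a
subspace `F` containing `A(E)`: the ratio `μF(A(B_E)) / μE(B_E)` where `B_E` is
the unit ball of `E`. -/
def detIn [NormedAddCommGroup B] [NormedSpace ℝ B] [NormedAddCommGroup B'] [NormedSpace ℝ B']
    [MeasurableSpace B] [MeasurableSpace B']
    (A : B →L[ℝ] B') (E : Submodule ℝ B) (F : Submodule ℝ B')
    (μE : Measure E) (μF : Measure F) : ℝ :=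
  (μF {w : F | ∃ v : B, v ∈ E ∧ ‖v‖ ≤ 1 ∧ A v = (w : B')}).toReal /
    (μE {v : E | ‖v‖ ≤ 1}).toReal

/-- `P[v₁, …, v_k]`: the parallelepiped spanned by the vectors `v i`. -/
def pped [AddCommGroup B] [Module ℝ B] {k : ℕ} (v : Fin k → B) : Set B :=
  {x : B | ∃ a : Fin k → ℝ, (∀ i, a i ∈ Set.Icc (0 : ℝ) 1) ∧ x = ∑ i, a i • v i}

/-- `N[v₁, …, v_k]`: the sum of the norms of the projections, within the span of the `v i`,
onto each `⟨v i⟩` along the span of the other basis vectors. -/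
def Nquan [NormedAddCommGroup B] [NormedSpace ℝ B] {k : ℕ} (v : Fin k → B) : ℝ :=
  ∑ i, sSup {r : ℝ | ∃ a : Fin k → ℝ, ‖∑ j, a j • v j‖ ≤ 1 ∧ r = ‖a i • v i‖}

/-- The operator norm of the restriction of `A` to the subspace `E`. -/
def opNormOnSub [NormedAddCommGroup B] [NormedSpace ℝ B] [NormedAddCommGroup B']
    [NormedSpace ℝ B'] (A : B →L[ℝ] B') (E : Submodule ℝ B) : ℝ :=
  sSup {r : ℝ | ∃ v ∈ E, ‖v‖ ≤ 1 ∧ r = ‖A v‖}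

/-- The `n`-th iterate (`n ∈ ℤ`) of the invertible pair `(f, g)`, `g = f⁻¹`. -/
def zIter {X : Type*} (f g : X → X) (n : ℤ) (x : X) : X :=
  if 0 ≤ n then f^[n.toNat] x else g^[(-n).toNat] x

/-- `ψ'(x) = sup_{n ∈ ℤ} e^{-|n| δ} ψ(f^n x)`. -/
def psiSup {X : Type*} (f g : X → X) (ψ : X → ℝ) (δ : ℝ) (x : X) : ℝ :=
  sSup (Set.range fun n : ℤ => Real.exp (-|(n : ℝ)| * δ) * ψ (zIter f g n x))

/-- The cocycle `T^n_x = T_{f^{n-1} x} ∘ ⋯ ∘ T_x`. -/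
def cocycle {X : Type*} [NormedAddCommGroup B] [NormedSpace ℝ B]
    (f : X → X) (T : X → B →L[ℝ] B) : ℕ → X → B →L[ℝ] B
  | 0, _ => ContinuousLinearMap.id ℝ B
  | n + 1, x => (cocycle f T n (f x)).comp (T x)

end BY

end

/-!
Auerbach's lemma gives a projection `P` onto `E₁` of norm at most `k`; since `E₂` lies within
Hausdorff distance `d_H(E₁, E₂)` of `E₁` on unit spheres, `P` moves vectors of `E₂` by at most
`(k + 1) d_H(E₁, E₂)` relatively. Hence `T = A₁ ∘ P ∘ (A₂|E₂)⁻¹ : A₂(E₂) → A₁(E₁)` is `η`-close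
to the identity, `η = M²(k + 1)(|A₁ - A₂| + d_H(E₁, E₂))`, and it maps `A₂(B_{E₂})` into
`(1 + η) A₁(B_{E₁})`. As `T` shrinks no vector by more than the factor `1 + 2η`, the push-forward
of `m_{A₂(E₂)}` by `T` is `c · m_{A₁(E₁)}` with `c ≤ (1 + 2η)^k` (compare unit balls), whence
`det(A₂|E₂) ≤ (1 + 2η)^{2k} det(A₁|E₁)`; by symmetry `|log (det(A₁|E₁) / det(A₂|E₂))| ≤ 4kη`.
-/

open scoped Pointwise

namespace BY

section Auerbach

variable {V : Type*} [NormedAddCommGroup V] [NormedSpace ℝ V]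

theorem continuous_basis_det {ι : Type*} [Fintype ι] [DecidableEq ι] [FiniteDimensional ℝ V]
    (b : Basis ι ℝ V) : Continuous fun u : ι → V => b.det u := by
  simp_rw [Basis.det_apply]
  exact (continuous_matrix fun i j => (b.coord i).continuous_of_finiteDimensional.comp
    (continuous_apply j)).matrix_det

theorem abs_det_update_le_of_isMaxOn {ι : Type*} [Fintype ι] [DecidableEq ι] (b : Basis ι ℝ V)
    {e : ι → V} (he : e ∈ univ.pi fun _ => sphere (0 : V) 1)
    (hmax : IsMaxOn (fun u => |b.det u|) (univ.pi fun _ => sphere (0 : V) 1) e) (i : ι) (x : V) :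
    |b.det (Function.update e i x)| ≤ ‖x‖ * |b.det e| := by
  rcases eq_or_ne x 0 with rfl | hx
  · simp
  have hx' : 0 < ‖x‖ := norm_pos_iff.2 hx
  have hunit : Function.update e i (‖x‖⁻¹ • x) ∈ univ.pi fun _ => sphere (0 : V) 1 := by
    intro j _
    rcases eq_or_ne j i with rfl | hj
    · simp [norm_smul, hx'.ne']
    · simpa [Function.update_of_ne hj] using he j trivial
  have : |b.det (Function.update e i (‖x‖⁻¹ • x))| ≤ |b.det e| := hmax hunit
  simp only [AlternatingMap.map_update_smul, smul_eq_mul, abs_mul, abs_inv,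
    abs_norm] at this
  rwa [inv_mul_le_iff₀ hx'] at this

theorem exists_auerbach_basis [FiniteDimensional ℝ V] :
    ∃ e : Basis (Fin (finrank ℝ V)) ℝ V, (∀ i, ‖e i‖ = 1) ∧ ∀ i x, |e.coord i x| ≤ ‖x‖ := by
  classical
  -- A unit tuple maximizing `|det|` is a basis whose coordinates, by Cramer's rule, are bounded.
  let b := finBasis ℝ V
  have hb : ∀ i, ‖b i‖ ≠ 0 := fun i => norm_ne_zero_iff.2 (b.ne_zero i)
  let b₁ := b.unitsSMul fun i => Units.mk0 ‖b i‖⁻¹ (inv_ne_zero (hb i))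
  have hb₁ : ⇑b₁ ∈ univ.pi fun _ => sphere (0 : V) 1 := fun i _ => by
    simp [b₁, Basis.unitsSMul_apply, norm_smul, hb i]
  obtain ⟨e, he, hmax⟩ := (isCompact_univ_pi fun _ => isCompact_sphere (0 : V) 1).exists_isMaxOn
    ⟨_, hb₁⟩ (continuous_basis_det b).abs.continuousOn
  have hdet : b.det e ≠ 0 := fun h0 =>
    (b.isUnit_det b₁).ne_zero (abs_nonpos_iff.1 (by simpa [h0] using hmax hb₁))
  obtain ⟨hli, hsp⟩ := (b.is_basis_iff_det).2 (isUnit_iff_ne_zero.2 hdet)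
  refine ⟨Basis.mk hli hsp.ge, fun i => by simpa using he i trivial, fun i x => ?_⟩
  have hcoord := congrArg (fun f => f x) (b.det_smul_mk_coord_eq_det_update hli hsp.ge i)
  simp only [LinearMap.smul_apply, smul_eq_mul, MultilinearMap.toLinearMap_apply,
    AlternatingMap.coe_multilinearMap] at hcoord
  have := abs_det_update_le_of_isMaxOn b he hmax i x
  rw [← hcoord, abs_mul, mul_comm] at this
  exact le_of_mul_le_mul_right this (abs_pos.2 hdet)

end Auerbach

variable {B B' : Type*} [NormedAddCommGroup B] [NormedSpace ℝ B] [NormedAddCommGroup B']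
  [NormedSpace ℝ B']

theorem exists_projection_norm_le_finrank (E : Submodule ℝ B) [FiniteDimensional ℝ E] :
    ∃ P : B →L[ℝ] E, (∀ x : E, P x = x) ∧ ‖P‖ ≤ finrank ℝ E := by
  obtain ⟨e, he, hcoord⟩ := exists_auerbach_basis (V := E)
  have hext : ∀ i, ∃ g : B →L[ℝ] ℝ, (∀ x : E, g x = e.coord i x) ∧ ‖g‖ ≤ 1 := fun i => by
    obtain ⟨g, hg, hgn⟩ := exists_extension_norm_eq E (e.coord i).toContinuousLinearMap
    refine ⟨g, hg, hgn ▸ ContinuousLinearMap.opNorm_le_bound _ zero_le_one fun x => ?_⟩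
    simpa using hcoord i x
  choose g hg hgn using hext
  let P : B →L[ℝ] E := ∑ i, (g i).smulRight (e i)
  refine ⟨P, fun x => ?_, ?_⟩
  · simp only [P, FunLike.coe_sum, Finset.sum_apply,
      ContinuousLinearMap.smulRight_apply, hg]
    exact e.sum_repr x
  · calc ‖P‖ ≤ ∑ i, ‖(g i).smulRight (e i)‖ :=
          norm_sum_le (E := B →L[ℝ] E) _ fun i => (g i).smulRight (e i)
      _ ≤ ∑ _i : Fin (finrank ℝ E), (1 : ℝ) := Finset.sum_le_sum fun i _ => by
          rw [ContinuousLinearMap.norm_smulRight_apply, he, mul_one]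
          exact hgn i
      _ = finrank ℝ E := by simp

theorem subSphere_eq_image (E : Submodule ℝ B) :
    subSphere E = ((↑) : E → B) '' sphere (0 : E) 1 := by
  ext v
  simp [subSphere, and_comm]

theorem isCompact_subSphere (E : Submodule ℝ B) [FiniteDimensional ℝ E] :
    IsCompact (subSphere E) :=
  subSphere_eq_image E ▸ (isCompact_sphere _ _).image continuous_subtype_val

theorem subSphere_nonempty (E : Submodule ℝ B) [Nontrivial E] : (subSphere E).Nonempty := by
  obtain ⟨v, hv⟩ := exists_norm_eq E zero_le_one
  exact ⟨v, v.2, hv⟩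

theorem exists_mem_norm_sub_le_dH_mul {E₁ E₂ : Submodule ℝ B} [FiniteDimensional ℝ E₁]
    [FiniteDimensional ℝ E₂] (hr : finrank ℝ E₁ = finrank ℝ E₂) {v : B} (hv : v ∈ E₂) :
    ∃ u ∈ E₁, ‖v - u‖ ≤ dH E₁ E₂ * ‖v‖ := by
  rcases eq_or_ne v 0 with rfl | hv0
  · exact ⟨0, E₁.zero_mem, by simp⟩
  have hv' : 0 < ‖v‖ := norm_pos_iff.2 hv0
  have : Nontrivial E₂ := ⟨⟨⟨v, hv⟩, 0, fun h => hv0 (congrArg Subtype.val h)⟩⟩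
  have : Nontrivial E₁ := finrank_pos_iff.1 (hr.symm ▸ finrank_pos : 0 < finrank ℝ E₁)
  have hvS : ‖v‖⁻¹ • v ∈ subSphere E₂ := ⟨E₂.smul_mem _ hv, by simp [norm_smul, hv'.ne']⟩
  obtain ⟨w, hwS, hw⟩ := (isCompact_subSphere E₁).exists_infDist_eq_dist
    (subSphere_nonempty E₁) (‖v‖⁻¹ • v)
  have hfin : hausdorffEDist (subSphere E₂) (subSphere E₁) ≠ ⊤ :=
    hausdorffEDist_ne_top_of_nonempty_of_bounded ⟨_, hvS⟩ (subSphere_nonempty E₁)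
      (isCompact_subSphere E₂).isBounded (isCompact_subSphere E₁).isBounded
  have hdist : ‖‖v‖⁻¹ • v - w‖ ≤ dH E₁ E₂ := by
    rw [← dist_eq_norm, ← hw, dH, hausdorffDist_comm]
    exact infDist_le_hausdorffDist_of_mem hvS hfin
  refine ⟨‖v‖ • w, E₁.smul_mem _ hwS.1, ?_⟩
  calc ‖v - ‖v‖ • w‖ = ‖v‖ * ‖‖v‖⁻¹ • v - w‖ := by
        rw [← norm_smul_of_nonneg hv'.le, smul_sub, smul_inv_smul₀ hv'.ne']
    _ ≤ ‖v‖ * dH E₁ E₂ := by gcongr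
    _ = dH E₁ E₂ * ‖v‖ := mul_comm _ _

theorem norm_projection_sub_le {E₁ E₂ : Submodule ℝ B} [FiniteDimensional ℝ E₁]
    [FiniteDimensional ℝ E₂] (hr : finrank ℝ E₁ = finrank ℝ E₂) {P : B →L[ℝ] E₁}
    (hP : ∀ x : E₁, P x = x) {v : B} (hv : v ∈ E₂) :
    ‖(P v : B) - v‖ ≤ (‖P‖ + 1) * dH E₁ E₂ * ‖v‖ := by
  obtain ⟨u, hu, huv⟩ := exists_mem_norm_sub_le_dH_mul hr hv
  have hPu : (P u : B) = u := congrArg Subtype.val (hP ⟨u, hu⟩)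
  calc ‖(P v : B) - v‖ = ‖(P (v - u) : B) - (v - u)‖ := by
        rw [map_sub, Submodule.coe_sub, hPu, sub_sub_sub_cancel_right]
    _ ≤ ‖P‖ * ‖v - u‖ + ‖v - u‖ := (norm_sub_le _ _).trans (by gcongr; exact P.le_opNorm _)
    _ = (‖P‖ + 1) * ‖v - u‖ := by ring
    _ ≤ (‖P‖ + 1) * (dH E₁ E₂ * ‖v‖) := by gcongr
    _ = (‖P‖ + 1) * dH E₁ E₂ * ‖v‖ := by ring

theorem dH_comm (E₁ E₂ : Submodule ℝ B) : dH E₁ E₂ = dH E₂ E₁ :=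
  hausdorffDist_comm

theorem dH_nonneg (E₁ E₂ : Submodule ℝ B) : 0 ≤ dH E₁ E₂ :=
  hausdorffDist_nonneg

/-- `A(B_E)`, as a subset of `A(E)`. -/
def imageBall (A : B →L[ℝ] B') (E : Submodule ℝ B) : Set (E.map A.toLinearMap) :=
  A.toLinearMap.submoduleMap E '' closedBall 0 1

theorem isCompact_imageBall (A : B →L[ℝ] B') (E : Submodule ℝ B) [FiniteDimensional ℝ E] :
    IsCompact (imageBall A E) :=
  (isCompact_closedBall _ _).image (A.toLinearMap.submoduleMap E).continuous_of_finiteDimensional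

theorem smul_imageBall (A : B →L[ℝ] B') (E : Submodule ℝ B) {r : ℝ} (hr : 0 ≤ r) :
    r • imageBall A E = A.toLinearMap.submoduleMap E '' closedBall 0 r := by
  rw [imageBall, ← image_smul_set, smul_unitClosedBall, Real.norm_of_nonneg hr]

section LowerBound

variable {A : B →L[ℝ] B'} {E : Submodule ℝ B} {M : ℝ}

theorem injective_submoduleMap_of_le_norm (hA : ∀ v ∈ E, ‖v‖ ≤ M * ‖A v‖) :
    Function.Injective (A.toLinearMap.submoduleMap E) := by
  refine (injective_iff_map_eq_zero _).2 fun v hv => Subtype.ext (norm_le_zero_iff.1 ?_)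
  have hAv : A v = 0 := congrArg Subtype.val hv
  simpa [hAv] using hA v v.2

theorem finrank_map_of_le_norm [FiniteDimensional ℝ E] (hA : ∀ v ∈ E, ‖v‖ ≤ M * ‖A v‖) :
    finrank ℝ (E.map A.toLinearMap) = finrank ℝ E :=
  (LinearEquiv.ofBijective _ ⟨injective_submoduleMap_of_le_norm hA,
    LinearMap.submoduleMap_surjective _ _⟩).finrank_eq.symm

theorem closedBall_subset_imageBall (hA : ∀ v ∈ E, ‖v‖ ≤ M * ‖A v‖) (hM : 0 < M) :
    closedBall 0 M⁻¹ ⊆ imageBall A E := by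
  rintro w hw
  obtain ⟨v, rfl⟩ := LinearMap.submoduleMap_surjective A.toLinearMap E w
  refine ⟨v, mem_closedBall_zero_iff.2 ?_, rfl⟩
  have hAv : ‖A v‖ ≤ M⁻¹ := mem_closedBall_zero_iff.1 hw
  calc ‖v‖ ≤ M * ‖A v‖ := hA v v.2
    _ ≤ M * M⁻¹ := by gcongr
    _ = 1 := mul_inv_cancel₀ hM.ne'

end LowerBound

theorem norm_le_of_norm_sub_le {G : Type*} [SeminormedAddCommGroup G] {x y : G} {η : ℝ}
    (hη₀ : 0 ≤ η) (hη : η ≤ 1 / 2) (h : ‖y - x‖ ≤ η * ‖x‖) : ‖x‖ ≤ (1 + 2 * η) * ‖y‖ := by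
  have hxy : ‖x‖ - ‖y‖ ≤ ‖y - x‖ := norm_sub_rev x y ▸ norm_sub_norm_le x y
  nlinarith [mul_nonneg (mul_nonneg hη₀ (by linarith : 0 ≤ 1 - 2 * η)) (norm_nonneg x)]

/-- The witness is `A₁ ∘ P ∘ (A₂|E₂)⁻¹` for a projection `P` onto `E₁` of norm at most
`finrank ℝ E₁`. -/
theorem exists_linearMap_near_id_image_imageBall_subset {M η : ℝ} (hM : 1 ≤ M)
    {A₁ A₂ : B →L[ℝ] B'} {E₁ E₂ : Submodule ℝ B} [FiniteDimensional ℝ E₁]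
    [FiniteDimensional ℝ E₂] (hr : finrank ℝ E₁ = finrank ℝ E₂) (hA₁ : ‖A₁‖ ≤ M)
    (hinv₂ : ∀ v ∈ E₂, ‖v‖ ≤ M * ‖A₂ v‖)
    (hη : M ^ 2 * (finrank ℝ E₁ + 1) * (‖A₁ - A₂‖ + dH E₁ E₂) ≤ η) :
    ∃ T : E₂.map A₂.toLinearMap →ₗ[ℝ] E₁.map A₁.toLinearMap,
      (∀ w, ‖(T w : B') - w‖ ≤ η * ‖w‖) ∧
      T '' imageBall A₂ E₂ ⊆ (1 + η) • imageBall A₁ E₁ := by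
  obtain ⟨P, hPid, hPnorm⟩ := exists_projection_norm_le_finrank E₁
  set k : ℝ := (finrank ℝ E₁ : ℝ)
  have hdA : 0 ≤ ‖A₁ - A₂‖ := norm_nonneg _
  have hdE : 0 ≤ dH E₁ E₂ := dH_nonneg E₁ E₂
  have hk : 0 ≤ k := Nat.cast_nonneg _
  have hP : ∀ v ∈ E₂, ‖(P v : B) - v‖ ≤ (k + 1) * dH E₁ E₂ * ‖v‖ := fun v hv =>
    (norm_projection_sub_le hr hPid hv).trans (by gcongr)
  let R₂ : E₂ ≃ₗ[ℝ] E₂.map A₂.toLinearMap := LinearEquiv.ofBijective _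
    ⟨injective_submoduleMap_of_le_norm hinv₂, LinearMap.submoduleMap_surjective _ _⟩
  let Q : E₂ →ₗ[ℝ] E₁ := P.toLinearMap ∘ₗ E₂.subtype
  let T := A₁.toLinearMap.submoduleMap E₁ ∘ₗ Q ∘ₗ R₂.symm.toLinearMap
  have hT : ∀ v : E₂, (T (R₂ v) : B') = A₁ (P v) := fun v => by simp [T, Q]
  refine ⟨T, fun w => ?_, ?_⟩
  · obtain ⟨v, rfl⟩ := R₂.surjective w
    have hsplit : A₁ (P v) - A₂ v = A₁ ((P v : B) - v) + (A₁ - A₂) v := by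
      simp only [map_sub, sub_apply]
      abel
    calc ‖(T (R₂ v) : B') - R₂ v‖ = ‖A₁ ((P v : B) - v) + (A₁ - A₂) v‖ := by
          rw [hT, ← hsplit]
          rfl
      _ ≤ M * ((k + 1) * dH E₁ E₂ * ‖(v : B)‖) + ‖A₁ - A₂‖ * ‖(v : B)‖ :=
          (norm_add_le _ _).trans (add_le_add
            ((A₁.le_opNorm _).trans (mul_le_mul hA₁ (hP v v.2) (norm_nonneg _) (by linarith)))
            ((A₁ - A₂).le_opNorm _))
      _ = (M * (k + 1) * dH E₁ E₂ + ‖A₁ - A₂‖) * ‖(v : B)‖ := by ring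
      _ ≤ (M * (k + 1) * dH E₁ E₂ + ‖A₁ - A₂‖) * (M * ‖R₂ v‖) := by
          gcongr
          exact hinv₂ v v.2
      _ = (M ^ 2 * (k + 1) * dH E₁ E₂ + M * ‖A₁ - A₂‖) * ‖R₂ v‖ := by ring
      _ ≤ η * ‖R₂ v‖ := by
          gcongr
          nlinarith [mul_le_mul_of_nonneg_right (by nlinarith : M ≤ M ^ 2 * (k + 1)) hdA]
  · have hη₀ : 0 ≤ η := le_trans (by positivity) hη
    have hdE' : (k + 1) * dH E₁ E₂ ≤ η := le_trans (by
      nlinarith [mul_le_mul_of_nonneg_right (one_le_pow₀ hM : 1 ≤ M ^ 2)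
        (by positivity : 0 ≤ (k + 1) * (‖A₁ - A₂‖ + dH E₁ E₂))]) hη
    rintro _ ⟨_, ⟨v, hv, rfl⟩, rfl⟩
    rw [mem_closedBall_zero_iff] at hv
    rw [smul_imageBall _ _ (by positivity)]
    refine ⟨P v, mem_closedBall_zero_iff.2 ?_, Subtype.ext (hT v).symm⟩
    calc ‖(P v : B)‖ ≤ ‖(v : B)‖ + ‖(P v : B) - v‖ := norm_le_insert' _ _
      _ ≤ 1 + (k + 1) * dH E₁ E₂ * 1 :=
          add_le_add (by exact hv) ((hP v v.2).trans (by gcongr; exact hv))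
      _ ≤ 1 + η := by linarith

theorem euclideanBallVol_pos (k : ℕ) : 0 < euclideanBallVol k :=
  measure_closedBall_pos _ _ one_pos

theorem euclideanBallVol_ne_top (k : ℕ) : euclideanBallVol k ≠ ⊤ :=
  measure_closedBall_lt_top.ne

section

variable [MeasurableSpace B] [BorelSpace B]

theorem IsInducedVolume.measure_closedBall {F : Submodule ℝ B} [FiniteDimensional ℝ F] {k : ℕ}
    {ν : Measure F} (hν : IsInducedVolume F k ν) (hF : finrank ℝ F = k) {r : ℝ} (hr : 0 ≤ r) :
    ν (closedBall 0 r) = ENNReal.ofReal (r ^ k) * euclideanBallVol k := by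
  have := hν.1
  rw [Measure.addHaar_closedBall' ν 0 hr, hF, ← hν.2]
  congr
  ext
  simp

theorem IsInducedVolume.measure_le_of_le_norm_map {F₁ F₂ : Submodule ℝ B}
    [FiniteDimensional ℝ F₁] [FiniteDimensional ℝ F₂] {k : ℕ}
    (hF₁ : finrank ℝ F₁ = k) (hF₂ : finrank ℝ F₂ = k) {ν₁ : Measure F₁} {ν₂ : Measure F₂}
    (h₁ : IsInducedVolume F₁ k ν₁) (h₂ : IsInducedVolume F₂ k ν₂) (T : F₂ →ₗ[ℝ] F₁) {s : ℝ}
    (hs : 0 ≤ s) (hT : ∀ w, ‖w‖ ≤ s * ‖T w‖) {S : Set F₂} (hS : MeasurableSet S) :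
    ν₂ S ≤ ENNReal.ofReal (s ^ k) * ν₁ (T '' S) := by
  have := h₁.1
  have := h₂.1
  have hinj : Function.Injective T := by
    refine (injective_iff_map_eq_zero T).2 fun w hw => norm_le_zero_iff.1 ?_
    simpa [hw] using hT w
  have hsurj : Function.Surjective T :=
    (LinearMap.injective_iff_surjective_of_finrank_eq_finrank (hF₂.trans hF₁.symm)).1 hinj
  let Te : F₂ ≃L[ℝ] F₁ := (LinearEquiv.ofBijective T ⟨hinj, hsurj⟩).toContinuousLinearEquiv
  let μ := Measure.map Te ν₂
  have := Te.isAddHaarMeasure_map ν₂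
  -- `Te_* ν₂` is a multiple `c • ν₁`, and comparing unit balls gives `c ≤ s ^ k`.
  set c := μ.addHaarScalarFactor ν₁
  have hμ : μ = c • ν₁ := Measure.isAddLeftInvariant_eq_smul μ ν₁
  have hpre : Te ⁻¹' closedBall 0 1 ⊆ closedBall 0 s := fun w hw => by
    simp only [mem_preimage, mem_closedBall_zero_iff] at hw ⊢
    exact (hT w).trans (mul_le_of_le_one_right hs hw)
  have hc : (c : ENNReal) * euclideanBallVol k ≤ ENNReal.ofReal (s ^ k) * euclideanBallVol k :=
    calc (c : ENNReal) * euclideanBallVol k = μ (closedBall 0 1) := by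
          rw [hμ, Measure.smul_apply, h₁.measure_closedBall hF₁ zero_le_one, one_pow,
            ENNReal.ofReal_one, one_mul, ENNReal.smul_def, smul_eq_mul]
      _ = ν₂ (Te ⁻¹' closedBall 0 1) :=
          Measure.map_apply Te.continuous.measurable measurableSet_closedBall
      _ ≤ ν₂ (closedBall 0 s) := measure_mono hpre
      _ = ENNReal.ofReal (s ^ k) * euclideanBallVol k := h₂.measure_closedBall hF₂ hs
  have hTS : MeasurableSet (Te '' S) := Te.toHomeomorph.toMeasurableEquiv.measurableSet_image.2 hS
  calc ν₂ S = μ (Te '' S) := by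
        rw [Measure.map_apply Te.continuous.measurable hTS, preimage_image_eq S Te.injective]
    _ = c * ν₁ (T '' S) := by rw [hμ, Measure.smul_apply, ENNReal.smul_def, smul_eq_mul]; rfl
    _ ≤ ENNReal.ofReal (s ^ k) * ν₁ (T '' S) := by
        gcongr
        exact (ENNReal.mul_le_mul_iff_left (euclideanBallVol_pos k).ne'
          (euclideanBallVol_ne_top k)).1 hc

end

section

variable [MeasurableSpace B'] [BorelSpace B']

theorem IsInducedVolume.measure_imageBall_le {k : ℕ} {M η : ℝ} (hM : 1 ≤ M)
    {A₁ A₂ : B →L[ℝ] B'} {E₁ E₂ : Submodule ℝ B} [FiniteDimensional ℝ E₁]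
    [FiniteDimensional ℝ E₂] (hr₁ : finrank ℝ E₁ = k) (hr₂ : finrank ℝ E₂ = k)
    (hA₁ : ‖A₁‖ ≤ M) (hinv₁ : ∀ v ∈ E₁, ‖v‖ ≤ M * ‖A₁ v‖)
    (hinv₂ : ∀ v ∈ E₂, ‖v‖ ≤ M * ‖A₂ v‖)
    {ν₁ : Measure (E₁.map A₁.toLinearMap)} {ν₂ : Measure (E₂.map A₂.toLinearMap)}
    (hν₁ : IsInducedVolume (E₁.map A₁.toLinearMap) k ν₁)
    (hν₂ : IsInducedVolume (E₂.map A₂.toLinearMap) k ν₂)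
    (hη : M ^ 2 * (k + 1) * (‖A₁ - A₂‖ + dH E₁ E₂) ≤ η) (hη₂ : η ≤ 1 / 2) :
    ν₂ (imageBall A₂ E₂) ≤ ENNReal.ofReal ((1 + 2 * η) ^ (2 * k)) * ν₁ (imageBall A₁ E₁) := by
  have hη₀ : 0 ≤ η := le_trans (by have := dH_nonneg E₁ E₂; positivity) hη
  have hF₁ : finrank ℝ (E₁.map A₁.toLinearMap) = k := (finrank_map_of_le_norm hinv₁).trans hr₁
  have hF₂ : finrank ℝ (E₂.map A₂.toLinearMap) = k := (finrank_map_of_le_norm hinv₂).trans hr₂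
  obtain ⟨T, hT, hTimage⟩ := exists_linearMap_near_id_image_imageBall_subset hM
    (hr₁.trans hr₂.symm) hA₁ hinv₂ (η := η) (by rwa [hr₁])
  have := hν₁.1
  calc ν₂ (imageBall A₂ E₂)
      ≤ ENNReal.ofReal ((1 + 2 * η) ^ k) * ν₁ (T '' imageBall A₂ E₂) :=
        hν₁.measure_le_of_le_norm_map hF₁ hF₂ hν₂ T (by positivity)
          (fun w => norm_le_of_norm_sub_le (x := (w : B')) (y := (T w : B')) hη₀ hη₂ (hT w))
          (isCompact_imageBall _ _).measurableSet
    _ ≤ ENNReal.ofReal ((1 + 2 * η) ^ k) * ν₁ ((1 + η) • imageBall A₁ E₁) := by gcongr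
    _ = ENNReal.ofReal ((1 + 2 * η) ^ k) *
          (ENNReal.ofReal ((1 + η) ^ k) * ν₁ (imageBall A₁ E₁)) := by
        rw [Measure.addHaar_smul, hF₁, abs_of_nonneg (by positivity)]
    _ ≤ ENNReal.ofReal ((1 + 2 * η) ^ k) *
          (ENNReal.ofReal ((1 + 2 * η) ^ k) * ν₁ (imageBall A₁ E₁)) := by
        gcongr
        linarith
    _ = ENNReal.ofReal ((1 + 2 * η) ^ (2 * k)) * ν₁ (imageBall A₁ E₁) := by
        rw [← mul_assoc, ← ENNReal.ofReal_mul (by positivity), ← pow_add, ← two_mul k]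

end

variable [MeasurableSpace B] [MeasurableSpace B']

theorem detIn_map_eq {k : ℕ} (A : B →L[ℝ] B') (E : Submodule ℝ B) {μ : Measure E}
    (ν : Measure (E.map A.toLinearMap)) (hμ : IsInducedVolume E k μ) :
    detIn A E (E.map A.toLinearMap) μ ν =
      (ν (imageBall A E)).toReal / (euclideanBallVol k).toReal := by
  rw [detIn, hμ.2]
  congr 3
  ext w
  constructor
  · rintro ⟨v, hv, hv1, hAv⟩
    exact ⟨⟨v, hv⟩, mem_closedBall_zero_iff.2 hv1, Subtype.ext hAv⟩
  · rintro ⟨v, hv1, rfl⟩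
    exact ⟨v, v.2, mem_closedBall_zero_iff.1 hv1, rfl⟩

theorem detIn_pos {k : ℕ} {M : ℝ} (hM : 0 < M) {A : B →L[ℝ] B'} {E : Submodule ℝ B}
    [FiniteDimensional ℝ E] (hinv : ∀ v ∈ E, ‖v‖ ≤ M * ‖A v‖) {μ : Measure E}
    {ν : Measure (E.map A.toLinearMap)} (hμ : IsInducedVolume E k μ)
    (hν : IsInducedVolume (E.map A.toLinearMap) k ν) :
    0 < detIn A E (E.map A.toLinearMap) μ ν := by
  have := hν.1
  rw [detIn_map_eq A E ν hμ]
  refine div_pos (ENNReal.toReal_pos (ne_of_gt ?_) (isCompact_imageBall A E).measure_lt_top.ne)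
    (ENNReal.toReal_pos (euclideanBallVol_pos k).ne' (euclideanBallVol_ne_top k))
  exact (measure_closedBall_pos ν 0 (inv_pos.2 hM)).trans_le
    (measure_mono (closedBall_subset_imageBall hinv hM))

theorem detIn_le_mul_detIn [BorelSpace B'] {k : ℕ} {M η : ℝ} (hM : 1 ≤ M)
    {A₁ A₂ : B →L[ℝ] B'} {E₁ E₂ : Submodule ℝ B} [FiniteDimensional ℝ E₁]
    [FiniteDimensional ℝ E₂] (hr₁ : finrank ℝ E₁ = k) (hr₂ : finrank ℝ E₂ = k)
    (hA₁ : ‖A₁‖ ≤ M) (hinv₁ : ∀ v ∈ E₁, ‖v‖ ≤ M * ‖A₁ v‖)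
    (hinv₂ : ∀ v ∈ E₂, ‖v‖ ≤ M * ‖A₂ v‖) {μ₁ : Measure E₁} {μ₂ : Measure E₂}
    {ν₁ : Measure (E₁.map A₁.toLinearMap)} {ν₂ : Measure (E₂.map A₂.toLinearMap)}
    (hμ₁ : IsInducedVolume E₁ k μ₁) (hμ₂ : IsInducedVolume E₂ k μ₂)
    (hν₁ : IsInducedVolume (E₁.map A₁.toLinearMap) k ν₁)
    (hν₂ : IsInducedVolume (E₂.map A₂.toLinearMap) k ν₂)
    (hη : M ^ 2 * (k + 1) * (‖A₁ - A₂‖ + dH E₁ E₂) ≤ η) (hη₂ : η ≤ 1 / 2) :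
    detIn A₂ E₂ (E₂.map A₂.toLinearMap) μ₂ ν₂ ≤
      (1 + 2 * η) ^ (2 * k) * detIn A₁ E₁ (E₁.map A₁.toLinearMap) μ₁ ν₁ := by
  have := hν₁.1
  have hη₀ : 0 ≤ η := le_trans (by have := dH_nonneg E₁ E₂; positivity) hη
  have h := ENNReal.toReal_mono
    (ENNReal.mul_ne_top ENNReal.ofReal_ne_top (isCompact_imageBall A₁ E₁).measure_lt_top.ne)
    (hν₁.measure_imageBall_le hM hr₁ hr₂ hA₁ hinv₁ hinv₂ hν₂ hη hη₂)
  rw [ENNReal.toReal_mul, ENNReal.toReal_ofReal (by positivity)] at h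
  rw [detIn_map_eq A₂ E₂ ν₂ hμ₂, detIn_map_eq A₁ E₁ ν₁ hμ₁, ← mul_div_assoc]
  gcongr

theorem abs_log_div_le_log {a b t : ℝ} (ha : 0 < a) (hb : 0 < b) (hab : a ≤ t * b)
    (hba : b ≤ t * a) : |Real.log (a / b)| ≤ Real.log t := by
  have ht : 0 < t := pos_of_mul_pos_left (ha.trans_le hab) hb.le
  have h₁ := Real.log_le_log ha hab
  have h₂ := Real.log_le_log hb hba
  rw [Real.log_mul ht.ne' hb.ne'] at h₁
  rw [Real.log_mul ht.ne' ha.ne'] at h₂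
  rw [Real.log_div ha.ne' hb.ne', abs_le]
  constructor <;> linarith

end BY

theorem statement10_general {B : Type*} [NormedAddCommGroup B] [NormedSpace ℝ B]
    [MeasurableSpace B] [BorelSpace B]
    (k : ℕ) (M : ℝ) (hM : 1 < M) :
    ∃ L₂ > (0 : ℝ), ∃ δ₂ > (0 : ℝ),
      ∀ (A₁ A₂ : B →L[ℝ] B) (E₁ E₂ : Submodule ℝ B)
        [FiniteDimensional ℝ E₁] [FiniteDimensional ℝ E₂],
        Module.finrank ℝ E₁ = k → Module.finrank ℝ E₂ = k →
        ‖A₁‖ ≤ M → ‖A₂‖ ≤ M →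
        (∀ v ∈ E₁, ‖v‖ ≤ M * ‖A₁ v‖) → (∀ v ∈ E₂, ‖v‖ ≤ M * ‖A₂ v‖) →
        ‖A₁ - A₂‖ ≤ δ₂ → BY.dH E₁ E₂ ≤ δ₂ →
        ∀ (μ₁ : MeasureTheory.Measure E₁) (μ₂ : MeasureTheory.Measure E₂)
          (ν₁ : MeasureTheory.Measure (E₁.map A₁.toLinearMap))
          (ν₂ : MeasureTheory.Measure (E₂.map A₂.toLinearMap)),
          BY.IsInducedVolume E₁ k μ₁ → BY.IsInducedVolume E₂ k μ₂ →
          BY.IsInducedVolume (E₁.map A₁.toLinearMap) k ν₁ →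
          BY.IsInducedVolume (E₂.map A₂.toLinearMap) k ν₂ →
          |Real.log (BY.detIn A₁ E₁ (E₁.map A₁.toLinearMap) μ₁ ν₁ /
              BY.detIn A₂ E₂ (E₂.map A₂.toLinearMap) μ₂ ν₂)| ≤
            L₂ * (‖A₁ - A₂‖ + BY.dH E₁ E₂) := by
  have hM₀ : 0 < M := one_pos.trans hM
  refine ⟨4 * M ^ 2 * (k + 1) ^ 2, by positivity, (4 * M ^ 2 * (k + 1))⁻¹, by positivity, ?_⟩
  intro A₁ A₂ E₁ E₂ _ _ hr₁ hr₂ hA₁ hA₂ hinv₁ hinv₂ hδA hδE μ₁ μ₂ ν₁ ν₂ hμ₁ hμ₂ hν₁ hν₂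
  set ε := ‖A₁ - A₂‖ + BY.dH E₁ E₂
  set η := M ^ 2 * (k + 1) * ε
  have hε : 0 ≤ ε := add_nonneg (norm_nonneg _) (BY.dH_nonneg E₁ E₂)
  have hη : η ≤ 1 / 2 :=
    calc η ≤ M ^ 2 * (k + 1) * ((4 * M ^ 2 * (k + 1))⁻¹ + (4 * M ^ 2 * (k + 1))⁻¹) :=
          mul_le_mul_of_nonneg_left (add_le_add hδA hδE) (by positivity)
      _ = 1 / 2 := by field_simp; norm_num
  have h₂₁ := BY.detIn_le_mul_detIn hM.le hr₁ hr₂ hA₁ hinv₁ hinv₂ hμ₁ hμ₂ hν₁ hν₂ le_rfl hη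
  have h₁₂ := BY.detIn_le_mul_detIn hM.le hr₂ hr₁ hA₂ hinv₂ hinv₁ hμ₂ hμ₁ hν₂ hν₁
    (by rw [norm_sub_rev, BY.dH_comm]) hη
  calc _ ≤ Real.log ((1 + 2 * η) ^ (2 * k)) := BY.abs_log_div_le_log
        (BY.detIn_pos hM₀ hinv₁ hμ₁ hν₁) (BY.detIn_pos hM₀ hinv₂ hμ₂ hν₂) h₁₂ h₂₁
    _ ≤ (2 * k) * (2 * η) := by
        rw [Real.log_pow, Nat.cast_mul, Nat.cast_ofNat]
        exact mul_le_mul_of_nonneg_left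
          (by linarith [Real.log_le_sub_one_of_pos (by positivity : 0 < 1 + 2 * η)]) (by positivity)
    _ ≤ 4 * M ^ 2 * (k + 1) ^ 2 * ε := by
        have : (k : ℝ) ≤ k + 1 := by linarith
        have := mul_nonneg (mul_nonneg (sq_nonneg M) (by positivity : (0 : ℝ) ≤ k + 1)) hε
        nlinarith

/-- Proposition 2.13 of the paper. For any `k ≥ 1` and `M > 1` there
exist `L₂, δ₂ > 0` such that: if `A₁, A₂ : B → B` are bounded operators and `E₁, E₂` are
`k`-dimensional subspaces with `|A_j| ≤ M`, `|(A_j|_{E_j})⁻¹| ≤ M` (i.e.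
`‖v‖ ≤ M ‖A_j v‖` for `v ∈ E_j`), `|A₁ - A₂| ≤ δ₂`, and `d_H(E₁, E₂) ≤ δ₂`, then
`|log (det(A₁|E₁) / det(A₂|E₂))| ≤ L₂ (|A₁ - A₂| + d_H(E₁, E₂))`. -/
theorem statement10 {B : Type*} [NormedAddCommGroup B] [NormedSpace ℝ B] [CompleteSpace B]
    [MeasurableSpace B] [BorelSpace B]
    (k : ℕ) (hk : 1 ≤ k) (M : ℝ) (hM : 1 < M) :
    ∃ L₂ > (0 : ℝ), ∃ δ₂ > (0 : ℝ),
      ∀ (A₁ A₂ : B →L[ℝ] B) (E₁ E₂ : Submodule ℝ B)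
        [FiniteDimensional ℝ E₁] [FiniteDimensional ℝ E₂],
        Module.finrank ℝ E₁ = k → Module.finrank ℝ E₂ = k →
        ‖A₁‖ ≤ M → ‖A₂‖ ≤ M →
        (∀ v ∈ E₁, ‖v‖ ≤ M * ‖A₁ v‖) → (∀ v ∈ E₂, ‖v‖ ≤ M * ‖A₂ v‖) →
        ‖A₁ - A₂‖ ≤ δ₂ → BY.dH E₁ E₂ ≤ δ₂ →
        ∀ (μ₁ : MeasureTheory.Measure E₁) (μ₂ : MeasureTheory.Measure E₂)
          (ν₁ : MeasureTheory.Measure (E₁.map A₁.toLinearMap))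
          (ν₂ : MeasureTheory.Measure (E₂.map A₂.toLinearMap)),
          BY.IsInducedVolume E₁ k μ₁ → BY.IsInducedVolume E₂ k μ₂ →
          BY.IsInducedVolume (E₁.map A₁.toLinearMap) k ν₁ →
          BY.IsInducedVolume (E₂.map A₂.toLinearMap) k ν₂ →
          |Real.log (BY.detIn A₁ E₁ (E₁.map A₁.toLinearMap) μ₁ ν₁ /
              BY.detIn A₂ E₂ (E₂.map A₂.toLinearMap) μ₂ ν₂)| ≤
            L₂ * (‖A₁ - A₂‖ + BY.dH E₁ E₂) :=
  statement10_general k M hM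
end

section
/- Let E, F be closed subspaces of a Banach space B with B = E ⊕ F. Then |π_{E⊕F}|^{-1} = α(E, F), where α(E, F) = inf{ |e − f| : e ∈ E, |e| = 1, f ∈ F }. Moreover, α(E, F) ≤ 2 α(F, E). -/
/-! Writing `x = e - f`, `α(E, F)` is the infimum of `‖x‖ / ‖π x‖` over `π x ≠ 0`, and for any
operator `T` the infimum of `‖x‖ / ‖T x‖` is `‖T‖⁻¹`. For the second claim, a unit `f ∈ F` and
`e ∈ E` with `‖f - e‖ < 1/2` have `‖e‖ > 1/2`, so rescaling `e` to a unit vector costs at most a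
factor `2`. -/

open MeasureTheory Filter Metric Module Submodule Set

namespace ContinuousLinearMap

variable {𝕜 X Y : Type*} [NontriviallyNormedField 𝕜] [NormedAddCommGroup X] [NormedSpace 𝕜 X]
  [NormedAddCommGroup Y] [NormedSpace 𝕜 Y]

theorem sInf_norm_div_norm_apply (T : X →L[𝕜] Y) :
    sInf {r : ℝ | ∃ x, T x ≠ 0 ∧ r = ‖x‖ / ‖T x‖} = ‖T‖⁻¹ := by
  set S := {r : ℝ | ∃ x, T x ≠ 0 ∧ r = ‖x‖ / ‖T x‖}
  rcases eq_or_ne T 0 with rfl | hT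
  · simp [S]
  have hTpos : 0 < ‖T‖ := norm_pos_iff.2 hT
  obtain ⟨x₀, hx₀⟩ : ∃ x, T x ≠ 0 := by
    by_contra! hzero
    exact hT (ext hzero)
  have hbdd : BddBelow S := ⟨0, by rintro _ ⟨x, -, rfl⟩; positivity⟩
  have hlower : ‖T‖⁻¹ ≤ sInf S := by
    refine le_csInf ⟨_, x₀, hx₀, rfl⟩ ?_
    rintro _ ⟨x, hx, rfl⟩
    rw [le_div_iff₀ (norm_pos_iff.2 hx), inv_mul_le_iff₀ hTpos]
    exact T.le_opNorm x
  have hpos : 0 < sInf S := (inv_pos.2 hTpos).trans_le hlower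
  refine le_antisymm ?_ hlower
  rw [le_inv_comm₀ hpos hTpos]
  refine T.opNorm_le_bound (inv_nonneg.2 hpos.le) fun x => ?_
  rcases eq_or_ne (T x) 0 with hx | hx
  · rw [hx, norm_zero]
    positivity
  have hle : sInf S ≤ ‖x‖ / ‖T x‖ := csInf_le hbdd ⟨x, hx, rfl⟩
  rw [le_div_iff₀ (norm_pos_iff.2 hx)] at hle
  rwa [inv_mul_eq_div, le_div_iff₀ hpos, mul_comm]

end ContinuousLinearMap

namespace BY

variable {B : Type*} [NormedAddCommGroup B] [NormedSpace ℝ B] {E F : Submodule ℝ B}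

theorem exists_unit_sub_eq_norm_sub_div_norm {e f : B} (he : e ∈ E) (hf : f ∈ F)
    (he0 : e ≠ 0) : ∃ e' ∈ E, ∃ f' ∈ F, ‖e'‖ = 1 ∧ ‖e - f‖ / ‖e‖ = ‖e' - f'‖ := by
  refine ⟨‖e‖⁻¹ • e, E.smul_mem _ he, ‖e‖⁻¹ • f, F.smul_mem _ hf, norm_smul_inv_norm he0, ?_⟩
  rw [← smul_sub, norm_smul, norm_inv, norm_norm, inv_mul_eq_div]

theorem alphaAngle_le_norm_sub_div_norm {e f : B} (he : e ∈ E) (hf : f ∈ F) (he0 : e ≠ 0) :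
    alphaAngle E F ≤ ‖e - f‖ / ‖e‖ :=
  csInf_le ⟨0, by rintro _ ⟨e, -, f, -, -, rfl⟩; positivity⟩
    (exists_unit_sub_eq_norm_sub_div_norm he hf he0)

theorem alphaAngle_le_one (E F : Submodule ℝ B) : alphaAngle E F ≤ 1 := by
  rcases eq_or_ne E ⊥ with rfl | hE
  · simp [alphaAngle]
  obtain ⟨e, he, he0⟩ := E.exists_mem_ne_zero_of_ne_bot hE
  simpa [div_self (norm_ne_zero_iff.2 he0)] using
    alphaAngle_le_norm_sub_div_norm he F.zero_mem he0

theorem alphaAngle_le_two_mul_alphaAngle (hF : F ≠ ⊥) :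
    alphaAngle E F ≤ 2 * alphaAngle F E := by
  obtain ⟨f₀, hf₀, hf₀0⟩ := F.exists_mem_ne_zero_of_ne_bot hF
  rw [← div_le_iff₀' two_pos]
  refine le_csInf ⟨_, exists_unit_sub_eq_norm_sub_div_norm hf₀ E.zero_mem hf₀0⟩ ?_
  rintro _ ⟨f, hf, e, he, hf1, rfl⟩
  by_cases hsmall : ‖f - e‖ < 1 / 2
  · have hnorm : 1 / 2 < ‖e‖ := by
      have := norm_sub_norm_le f e
      linarith
    have he0 : e ≠ 0 := norm_pos_iff.1 (by linarith)
    calc alphaAngle E F / 2 ≤ ‖e - f‖ / ‖e‖ / 2 := by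
          gcongr
          exact alphaAngle_le_norm_sub_div_norm he hf he0
      _ ≤ ‖f - e‖ := by
          rw [norm_sub_rev, div_div, div_le_iff₀ (by linarith)]
          nlinarith [norm_nonneg (f - e)]
  · linarith [alphaAngle_le_one E F]

theorem alphaAngle_eq_sInf_norm_div_norm_projectionOnto (h : IsCompl E F) :
    alphaAngle E F =
      sInf {r : ℝ | ∃ x, E.projectionOnto F h x ≠ 0 ∧ r = ‖x‖ / ‖E.projectionOnto F h x‖} := by
  rw [alphaAngle]
  congr 1
  ext r
  constructor
  · rintro ⟨e, he, f, hf, he1, rfl⟩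
    have hproj : E.projectionOnto F h (e - f) = ⟨e, he⟩ := by
      rw [map_sub, projectionOnto_apply_of_mem_left h he, projectionOnto_apply_of_mem_right h hf,
        sub_zero]
    refine ⟨e - f, by simp [hproj, ← norm_ne_zero_iff, he1], ?_⟩
    rw [hproj, Submodule.coe_norm, he1, div_one]
  · rintro ⟨x, hx, rfl⟩
    have hxF : (E.projectionOnto F h x : B) - x ∈ F :=
      sub_mem_comm_iff.1 (sub_projection_mem h x)
    have := exists_unit_sub_eq_norm_sub_div_norm (E.projectionOnto F h x).2 hxF
      (by exact_mod_cast hx)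
    rwa [sub_sub_cancel] at this

end BY

theorem statement13_general {B : Type*} [NormedAddCommGroup B] [NormedSpace ℝ B] [CompleteSpace B]
    (E F : Submodule ℝ B)
    (hEc : IsClosed (E : Set B)) (hFc : IsClosed (F : Set B))
    (hFbot : F ≠ ⊥)
    (h : IsCompl E F) :
    (BY.projNorm E F h)⁻¹ = BY.alphaAngle E F ∧
    BY.alphaAngle E F ≤ 2 * BY.alphaAngle F E := by
  set P := E.projectionOntoL F (h.isTopCompl_of_isClosed hEc hFc)
  have hproj : BY.projNorm E F h = ‖P‖ := by
    rw [← P.sSup_unitClosedBall_eq_norm]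
    rfl
  refine ⟨?_, BY.alphaAngle_le_two_mul_alphaAngle hFbot⟩
  rw [hproj, BY.alphaAngle_eq_sInf_norm_div_norm_projectionOnto h]
  exact P.sInf_norm_div_norm_apply.symm

/-- Sect. 2.1.2 of the paper. Let `E, F` be closed subspaces of a
Banach space `B` with `B = E ⊕ F`. Then `|π_{E⊕F}|⁻¹ = α(E, F)`, where
`α(E, F) = inf { |e - f| : e ∈ E, |e| = 1, f ∈ F }`; moreover `α(E, F) ≤ 2 α(F, E)`. -/
theorem statement13 {B : Type*} [NormedAddCommGroup B] [NormedSpace ℝ B] [CompleteSpace B]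
    (E F : Submodule ℝ B)
    (hEc : IsClosed (E : Set B)) (hFc : IsClosed (F : Set B))
    (hEbot : E ≠ ⊥) (hFbot : F ≠ ⊥)
    (h : IsCompl E F) :
    (BY.projNorm E F h)⁻¹ = BY.alphaAngle E F ∧
    BY.alphaAngle E F ≤ 2 * BY.alphaAngle F E :=
  statement13_general E F hEc hFc hFbot h
end

section
/- Let (X, F, μ, f) be an invertible measure-preserving transformation of a probability space, and let φ : X → ℝ be measurable such that either (φ∘f − φ)^+ or (φ∘f − φ)^− is integrable. Then (1/|n|) φ(f^n x) → 0 as n → +∞ and as n → −∞, for μ-almost every x. -/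
open MeasureTheory Filter Metric Module Submodule Set

/-!
Write `ψ = φ ∘ f - φ`, so that `φ (fⁿ x) - φ x` is the Birkhoff sum `Sₙ ψ x`.

Truncating `φ` at height `M` gives bounded coboundaries with integral zero, and Fatou's lemma
turns this into `∫ ψ⁻ ≤ ∫ ψ⁺`. Hence `ψ` is integrable as soon as one of `ψ⁺`, `ψ⁻` is, and then
`∫_E ψ = 0` for every invariant set `E` (apply the same to `1_E φ`, whose coboundary is `1_E ψ`).

For `c > 0`, the set `E` where `Sₙ (ψ - c)` is unbounded above is invariant, and the maximal
ergodic theorem gives `0 ≤ ∫_E (ψ - c) = -c μ(E)`. So almost surely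
`φ (fⁿ x) ≤ φ x + c n + O(1)` for every `c > 0`; applying this to `-φ` and to `f⁻¹` gives the
claim.
-/

noncomputable def clamp (M a : ℝ) : ℝ := max (-M) (min a M)

lemma clamp_sub_clamp_le (M a b : ℝ) : clamp M a - clamp M b ≤ max (a - b) 0 := by
  unfold clamp
  simp only [max_def, min_def]
  split_ifs <;> linarith

lemma abs_clamp_le (M a : ℝ) : |clamp M a| ≤ |M| := by
  unfold clamp
  rw [abs_le]
  constructor <;> simp only [max_def, min_def] <;> split_ifs <;>
    linarith [neg_abs_le M, le_abs_self M]

lemma clamp_of_abs_le {M a : ℝ} (h : |a| ≤ M) : clamp M a = a := by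
  rw [abs_le] at h
  rw [clamp, min_eq_left h.2, max_eq_right h.1]

@[fun_prop]
lemma measurable_clamp (M : ℝ) : Measurable (clamp M) := by
  unfold clamp
  fun_prop

lemma eventually_clamp_eq (a : ℝ) : ∀ᶠ M : ℕ in atTop, clamp M a = a :=
  (eventually_ge_atTop ⌈|a|⌉₊).mono fun _ hM =>
    clamp_of_abs_le ((Nat.le_ceil _).trans (by exact_mod_cast hM))

lemma lintegral_ofReal_neg_eq_of_integral_eq_zero {α : Type*} [MeasurableSpace α]
    {μ : Measure α} {w : α → ℝ} (hw : Integrable w μ) (h : ∫ x, w x ∂μ = 0) :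
    ∫⁻ x, ENNReal.ofReal (-w x) ∂μ = ∫⁻ x, ENNReal.ofReal (w x) ∂μ := by
  rw [integral_eq_lintegral_pos_part_sub_lintegral_neg_part hw, sub_eq_zero] at h
  exact (ENNReal.toReal_eq_toReal_iff' hw.neg.lintegral_lt_top.ne hw.lintegral_lt_top.ne).mp h.symm

section BirkhoffSum

variable {α : Type*} {f : α → α}

lemma birkhoffSum_comp_sub (f : α → α) (u : α → ℝ) (n : ℕ) (x : α) :
    birkhoffSum f (fun y => u (f y) - u y) n x = u (f^[n] x) - u x := by
  induction n with
  | zero => simp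
  | succ n ih =>
    rw [birkhoffSum_succ, ih, Function.iterate_succ_apply']
    ring

lemma bddAbove_range_birkhoffSum_comp_iff (f : α → α) (h : α → ℝ) (x : α) :
    BddAbove (range fun n => birkhoffSum f h n (f x)) ↔
      BddAbove (range fun n => birkhoffSum f h n x) := by
  constructor
  · rintro ⟨C, hC⟩
    refine ⟨max 0 (h x + C), forall_mem_range.2 fun n => ?_⟩
    cases n with
    | zero => simp
    | succ n =>
      rw [birkhoffSum_succ']
      exact le_max_of_le_right (add_le_add le_rfl (hC (mem_range_self n)))
  · rintro ⟨C, hC⟩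
    refine ⟨C - h x, forall_mem_range.2 fun n => ?_⟩
    have hCn := hC (mem_range_self (n + 1))
    rw [birkhoffSum_succ'] at hCn
    linarith

lemma preimage_setOf_not_bddAbove_birkhoffSum (f : α → α) (h : α → ℝ) :
    f ⁻¹' {x | ¬BddAbove (range fun n => birkhoffSum f h n x)} =
      {x | ¬BddAbove (range fun n => birkhoffSum f h n x)} := by
  ext x
  simp only [mem_preimage, mem_ofPred_eq, bddAbove_range_birkhoffSum_comp_iff]

lemma measurable_birkhoffSum [MeasurableSpace α] {h : α → ℝ} (hf : Measurable f)
    (hh : Measurable h) (n : ℕ) : Measurable (birkhoffSum f h n) :=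
  Finset.measurable_sum _ fun i _ => hh.comp (hf.iterate i)

/-- The running maximum `max_{k ≤ n} birkhoffSum f h k x`. -/
noncomputable def birkhoffMax (f : α → α) (h : α → ℝ) : ℕ → α → ℝ
  | 0 => 0
  | n + 1 => fun x => max (h x + birkhoffMax f h n (f x)) 0

variable {h : α → ℝ}

lemma birkhoffMax_nonneg (n : ℕ) (x : α) : 0 ≤ birkhoffMax f h n x := by
  cases n with
  | zero => rfl
  | succ n => exact le_max_right _ _

lemma birkhoffMax_le_succ (n : ℕ) (x : α) : birkhoffMax f h n x ≤ birkhoffMax f h (n + 1) x := by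
  induction n generalizing x with
  | zero => exact birkhoffMax_nonneg 1 x
  | succ n ih => exact max_le_max (add_le_add le_rfl (ih (f x))) le_rfl

lemma monotone_birkhoffMax (x : α) : Monotone fun n => birkhoffMax f h n x :=
  monotone_nat_of_le_succ fun n => birkhoffMax_le_succ n x

lemma birkhoffSum_le_birkhoffMax (n : ℕ) (x : α) : birkhoffSum f h n x ≤ birkhoffMax f h n x := by
  induction n generalizing x with
  | zero => simp [birkhoffMax]
  | succ n ih =>
    rw [birkhoffSum_succ']
    exact (add_le_add le_rfl (ih (f x))).trans (le_max_left _ _)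

lemma birkhoffMax_sub_comp_le_of_pos {n : ℕ} {x : α} (hx : 0 < birkhoffMax f h n x) :
    birkhoffMax f h n x - birkhoffMax f h n (f x) ≤ h x := by
  cases n with
  | zero => exact absurd hx (lt_irrefl 0)
  | succ k =>
    have hMx : birkhoffMax f h (k + 1) x = h x + birkhoffMax f h k (f x) :=
      max_eq_left_iff.mpr (le_of_lt (by simpa [birkhoffMax] using hx))
    linarith [birkhoffMax_le_succ (f := f) (h := h) k (f x)]

lemma measurable_birkhoffMax [MeasurableSpace α] (hf : Measurable f) (hh : Measurable h)
    (n : ℕ) : Measurable (birkhoffMax f h n) := by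
  induction n with
  | zero => exact measurable_const
  | succ n ih => exact (hh.add (ih.comp hf)).max measurable_const

end BirkhoffSum

namespace MeasureTheory.MeasurePreserving

variable {α : Type*} [MeasurableSpace α] {μ : Measure α} {f : α → α} {u h : α → ℝ}

lemma integral_comp_eq {β : Type*} [MeasurableSpace β] {ν : Measure β} {g : α → β}
    (hg : MeasurePreserving g μ ν) {v : β → ℝ} (hv : AEStronglyMeasurable v ν) :
    ∫ x, v (g x) ∂μ = ∫ y, v y ∂ν := by
  conv_rhs => rw [← hg.map_eq]
  exact (integral_map hg.aemeasurable (hg.map_eq.symm ▸ hv)).symm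

lemma integral_comp_sub_eq_zero_of_integrable (hf : MeasurePreserving f μ μ)
    (hu : Integrable u μ) : ∫ x, (u (f x) - u x) ∂μ = 0 := by
  have hu_comp : Integrable (fun x => u (f x)) μ := (hf.integrable_comp hu.1).mpr hu
  rw [integral_sub hu_comp hu, hf.integral_comp_eq hu.1, sub_self]

lemma lintegral_ofReal_sub_comp_le [IsFiniteMeasure μ] (hf : MeasurePreserving f μ μ)
    (hu : Measurable u) :
    ∫⁻ x, ENNReal.ofReal (u x - u (f x)) ∂μ ≤ ∫⁻ x, ENNReal.ofReal (u (f x) - u x) ∂μ := by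
  have hf_meas := hf.measurable
  set d : ℕ → α → ℝ := fun M x => clamp M (u (f x)) - clamp M (u x)
  have hd_symm : ∀ M : ℕ,
      ∫⁻ x, ENNReal.ofReal (-d M x) ∂μ = ∫⁻ x, ENNReal.ofReal (d M x) ∂μ := by
    intro M
    have hv : Integrable (fun x => clamp M (u x)) μ :=
      .of_bound ((measurable_clamp M).comp hu).aestronglyMeasurable |(M : ℝ)|
      (.of_forall fun x => (Real.norm_eq_abs _).trans_le (abs_clamp_le _ _))
    exact lintegral_ofReal_neg_eq_of_integral_eq_zero
      (((hf.integrable_comp hv.1).mpr hv).sub hv) (hf.integral_comp_sub_eq_zero_of_integrable hv)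
  have hd_lim : ∀ x, Tendsto (fun M : ℕ => ENNReal.ofReal (-d M x)) atTop
      (nhds (ENNReal.ofReal (u x - u (f x)))) := fun x =>
    tendsto_const_nhds.congr' <| ((eventually_clamp_eq (u (f x))).and
      (eventually_clamp_eq (u x))).mono fun M hM => by simp only [d, hM.1, hM.2, neg_sub]
  calc ∫⁻ x, ENNReal.ofReal (u x - u (f x)) ∂μ
      = ∫⁻ x, liminf (fun M : ℕ => ENNReal.ofReal (-d M x)) atTop ∂μ :=
        lintegral_congr fun x => (hd_lim x).liminf_eq.symm
    _ ≤ liminf (fun M : ℕ => ∫⁻ x, ENNReal.ofReal (-d M x) ∂μ) atTop :=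
        lintegral_liminf_le fun M => by fun_prop
    _ ≤ ∫⁻ x, ENNReal.ofReal (u (f x) - u x) ∂μ := by
        refine liminf_le_of_frequently_le' (.of_forall fun M => ?_)
        rw [hd_symm M]
        refine lintegral_mono fun x =>
          (ENNReal.ofReal_le_ofReal (clamp_sub_clamp_le _ _ _)).trans ?_
        simp

lemma integrable_comp_sub_of_integrable_max [IsFiniteMeasure μ] (hf : MeasurePreserving f μ μ)
    (hu : Measurable u) (hplus : Integrable (fun x => max (u (f x) - u x) 0) μ) :
    Integrable (fun x => u (f x) - u x) μ := by
  have hf_meas := hf.measurable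
  have hneg : Integrable (fun x => max (-(u (f x) - u x)) 0) μ := by
    refine (lintegral_ofReal_ne_top_iff_integrable (by fun_prop)
      (.of_forall fun x => le_max_right _ _)).mp ?_
    have hpos := hplus.lintegral_lt_top
    simp only [ENNReal.ofReal_max, ENNReal.ofReal_zero, Pi.zero_apply, zero_le, max_eq_left,
      neg_sub] at hpos ⊢
    exact ((hf.lintegral_ofReal_sub_comp_le hu).trans_lt hpos).ne
  exact (hplus.sub hneg).congr (.of_forall fun x => max_zero_sub_max_neg_zero_eq_self _)

lemma integral_comp_sub_eq_zero [IsFiniteMeasure μ] (hf : MeasurePreserving f μ μ)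
    (hu : Measurable u) : ∫ x, (u (f x) - u x) ∂μ = 0 := by
  by_cases hint : Integrable (fun x => u (f x) - u x) μ
  · rw [integral_eq_lintegral_pos_part_sub_lintegral_neg_part hint, sub_eq_zero]
    congr 1
    refine le_antisymm ?_ (by simpa only [neg_sub] using hf.lintegral_ofReal_sub_comp_le hu)
    simpa only [Pi.neg_apply, neg_sub_neg, neg_sub] using hf.lintegral_ofReal_sub_comp_le hu.neg
  · exact integral_undef hint

lemma setIntegral_comp_sub_eq_zero [IsFiniteMeasure μ] (hf : MeasurePreserving f μ μ)
    (hu : Measurable u) {E : Set α} (hE : MeasurableSet E) (hinv : f ⁻¹' E = E) :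
    ∫ x in E, (u (f x) - u x) ∂μ = 0 := by
  have hcob : E.indicator (fun x => u (f x) - u x) =
      fun x => E.indicator u (f x) - E.indicator u x := by
    ext x
    have hfx : f x ∈ E ↔ x ∈ E := by rw [← mem_preimage, hinv]
    by_cases hx : x ∈ E <;> simp [hx, hfx]
  rw [← integral_indicator hE, hcob]
  exact hf.integral_comp_sub_eq_zero (hu.indicator hE)

lemma integrable_birkhoffMax (hf : MeasurePreserving f μ μ) (hh : Integrable h μ) (n : ℕ) :
    Integrable (birkhoffMax f h n) μ := by
  induction n with
  | zero => exact integrable_zero _ _ μ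
  | succ n ih => exact (hh.add ((hf.integrable_comp ih.1).mpr ih)).pos_part

/-- Garsia's form of the maximal ergodic theorem. -/
lemma setIntegral_birkhoffMax_pos_nonneg (hf : MeasurePreserving f μ μ) (hh : Measurable h)
    (hint : Integrable h μ) (n : ℕ) :
    0 ≤ ∫ x in {x | 0 < birkhoffMax f h n x}, h x ∂μ := by
  set M := birkhoffMax f h n
  set G := {x | 0 < M x}
  have hG : MeasurableSet G :=
    measurableSet_lt measurable_const (measurable_birkhoffMax hf.measurable hh n)
  have hM : Integrable M μ := hf.integrable_birkhoffMax hint n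
  have hMf : Integrable (fun x => M (f x)) μ := (hf.integrable_comp hM.1).mpr hM
  have hMG : ∫ x in G, M x ∂μ = ∫ x, M x ∂μ :=
    setIntegral_eq_integral_of_forall_compl_eq_zero fun x hx =>
      le_antisymm (not_lt.mp hx) (birkhoffMax_nonneg n x)
  calc (0 : ℝ) = ∫ x, M x ∂μ - ∫ x, M (f x) ∂μ := by rw [hf.integral_comp_eq hM.1, sub_self]
    _ ≤ ∫ x in G, M x ∂μ - ∫ x in G, M (f x) ∂μ := by
      rw [hMG]
      exact sub_le_sub_left
        (setIntegral_le_integral hMf (.of_forall fun x => birkhoffMax_nonneg n (f x))) _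
    _ = ∫ x in G, (M x - M (f x)) ∂μ := (integral_sub hM.integrableOn hMf.integrableOn).symm
    _ ≤ ∫ x in G, h x ∂μ := setIntegral_mono_on (hM.integrableOn.sub hMf.integrableOn)
      hint.integrableOn hG fun x hx => birkhoffMax_sub_comp_le_of_pos hx

lemma setIntegral_not_bddAbove_birkhoffSum_nonneg (hf : MeasurePreserving f μ μ)
    (hh : Measurable h) (hint : Integrable h μ) :
    0 ≤ ∫ x in {x | ¬BddAbove (range fun n => birkhoffSum f h n x)}, h x ∂μ := by
  set E := {x | ¬BddAbove (range fun n => birkhoffSum f h n x)}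
  have hE : MeasurableSet E :=
    (measurableSet_bddAbove_range (measurable_birkhoffSum hf.measurable hh)).compl
  have hfE : MeasurePreserving f (μ.restrict E) (μ.restrict E) := by
    simpa only [E, preimage_setOf_not_bddAbove_birkhoffSum] using hf.restrict_preimage hE
  have hpos : ∀ n, MeasurableSet {x | 0 < birkhoffMax f h n x} := fun n =>
    measurableSet_lt measurable_const (measurable_birkhoffMax hf.measurable hh n)
  set G : ℕ → Set α := fun n => {x | 0 < birkhoffMax f h n x} ∩ E
  have hG_mono : Monotone G := fun m n hmn x hx =>
    ⟨hx.1.trans_le (monotone_birkhoffMax x hmn), hx.2⟩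
  have hG_union : ⋃ n, G n = E := by
    refine Subset.antisymm (iUnion_subset fun n => inter_subset_right) fun x hx => ?_
    obtain ⟨_, ⟨n, rfl⟩, hn⟩ := not_bddAbove_iff.mp hx 0
    exact mem_iUnion.mpr ⟨n, hn.trans_le (birkhoffSum_le_birkhoffMax n x), hx⟩
  have hG_nonneg : ∀ n, 0 ≤ ∫ x in G n, h x ∂μ := fun n => by
    have := hfE.setIntegral_birkhoffMax_pos_nonneg hh hint.restrict n
    rwa [Measure.restrict_restrict (hpos n)] at this
  have hlim := tendsto_setIntegral_of_monotone (fun n => (hpos n).inter hE) hG_mono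
    hint.integrableOn
  rw [hG_union] at hlim
  exact ge_of_tendsto' hlim hG_nonneg

lemma ae_bddAbove_comp_iterate_sub [IsFiniteMeasure μ] (hf : MeasurePreserving f μ μ)
    (hu : Measurable u) (hint : Integrable (fun x => u (f x) - u x) μ) {c : ℝ} (hc : 0 < c) :
    ∀ᵐ x ∂μ, BddAbove (range fun n : ℕ => u (f^[n] x) - u x - c * n) := by
  have hf_meas := hf.measurable
  set h := fun x => u (f x) - u x - c
  have hh : Measurable h := by fun_prop
  have hS : ∀ x n, birkhoffSum f h n x = u (f^[n] x) - u x - c * n := fun x n => by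
    rw [← birkhoffSum_comp_sub]
    simp [h, birkhoffSum, Finset.sum_sub_distrib, mul_comm]
  set E := {x | ¬BddAbove (range fun n => birkhoffSum f h n x)}
  have hE : MeasurableSet E :=
    (measurableSet_bddAbove_range (measurable_birkhoffSum hf_meas hh)).compl
  have hμE : μ.real E = 0 := by
    have hmax := hf.setIntegral_not_bddAbove_birkhoffSum_nonneg hh (hint.sub (integrable_const c))
    rw [integral_sub hint.integrableOn (integrable_const c).integrableOn,
      hf.setIntegral_comp_sub_eq_zero hu hE (preimage_setOf_not_bddAbove_birkhoffSum f h),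
      setIntegral_const, smul_eq_mul] at hmax
    nlinarith [measureReal_nonneg (μ := μ) (s := E)]
  filter_upwards [measure_eq_zero_iff_ae_notMem.mp ((measureReal_eq_zero_iff).mp hμE)] with x hx
  simpa only [E, mem_ofPred_eq, not_not, hS] using hx

lemma ae_eventually_comp_iterate_le [IsFiniteMeasure μ] (hf : MeasurePreserving f μ μ)
    (hu : Measurable u) (hint : Integrable (fun x => u (f x) - u x) μ) :
    ∀ᵐ x ∂μ, ∀ ε > 0, ∀ᶠ n : ℕ in atTop, u (f^[n] x) ≤ ε * n := by
  have hbdd := ae_all_iff.mpr fun m : ℕ =>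
    hf.ae_bddAbove_comp_iterate_sub hu hint (Nat.one_div_pos_of_nat (n := m))
  filter_upwards [hbdd] with x hx ε hε
  obtain ⟨m, hm⟩ := exists_nat_one_div_lt (half_pos hε)
  obtain ⟨C, hC⟩ := hx m
  have hlin : ∀ᶠ n : ℕ in atTop, C + u x ≤ ε / 2 * n :=
    (tendsto_natCast_atTop_atTop.const_mul_atTop (half_pos hε)).eventually_ge_atTop _
  filter_upwards [hlin] with n hn
  have hCn := hC (mem_range_self n)
  have hmn : 1 / ((m : ℝ) + 1) * n ≤ ε / 2 * n := by gcongr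
  linarith

lemma ae_tendsto_inv_mul_comp_iterate [IsFiniteMeasure μ] (hf : MeasurePreserving f μ μ)
    (hu : Measurable u) (hint : Integrable (fun x => u (f x) - u x) μ) :
    ∀ᵐ x ∂μ, Tendsto (fun n : ℕ => (n : ℝ)⁻¹ * u (f^[n] x)) atTop (nhds 0) := by
  have hint_neg : Integrable (fun x => (-u) (f x) - (-u) x) μ :=
    hint.neg.congr (.of_forall fun x => by simp only [Pi.neg_apply]; ring)
  filter_upwards [hf.ae_eventually_comp_iterate_le hu hint,
    hf.ae_eventually_comp_iterate_le hu.neg hint_neg] with x hup hlow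
  have : (fun n : ℕ => u (f^[n] x)) =o[atTop] fun n => (n : ℝ) :=
    .of_bound fun ε hε => ((hup ε hε).and (hlow ε hε)).mono fun n hn => by
      rw [Pi.neg_apply] at hn
      rw [Real.norm_eq_abs, Real.norm_natCast, abs_le]
      constructor <;> linarith [hn.1, hn.2]
  simpa only [div_eq_inv_mul] using this.tendsto_div_nhds_zero

end MeasureTheory.MeasurePreserving

theorem statement15_general {X : Type*} [MeasurableSpace X]
    (μ : MeasureTheory.Measure X) [MeasureTheory.IsProbabilityMeasure μ]
    (f g : X → X) (hg : Measurable g)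
    (hgf : ∀ x, g (f x) = x) (hfg : ∀ x, f (g x) = x)
    (hpres : MeasureTheory.MeasurePreserving f μ μ)
    (φ : X → ℝ) (hφ : Measurable φ)
    (hint : MeasureTheory.Integrable (fun x => max (φ (f x) - φ x) 0) μ ∨
      MeasureTheory.Integrable (fun x => max (φ x - φ (f x)) 0) μ) :
    ∀ᵐ x ∂μ,
      Filter.Tendsto (fun n : ℕ => (n : ℝ)⁻¹ * φ (f^[n] x)) Filter.atTop (nhds 0) ∧
      Filter.Tendsto (fun n : ℕ => (n : ℝ)⁻¹ * φ (g^[n] x)) Filter.atTop (nhds 0) := by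
  have hcob : Integrable (fun x => φ (f x) - φ x) μ := by
    rcases hint with hplus | hminus
    · exact hpres.integrable_comp_sub_of_integrable_max hφ hplus
    · have := hpres.integrable_comp_sub_of_integrable_max hφ.neg
        (by simpa only [Pi.neg_apply, neg_sub_neg] using hminus)
      exact this.neg.congr (.of_forall fun x => by simp only [Pi.neg_apply]; ring)
  let e : X ≃ᵐ X := ⟨⟨f, g, hgf, hfg⟩, hpres.measurable, hg⟩
  have hgpres : MeasurePreserving g μ μ := hpres.symm e
  have hcob_g : Integrable (fun x => φ (g x) - φ x) μ :=
    ((hgpres.integrable_comp hcob.1).mpr hcob).neg.congr (.of_forall fun x => by simp [hfg])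
  filter_upwards [hpres.ae_tendsto_inv_mul_comp_iterate hφ hcob,
    hgpres.ae_tendsto_inv_mul_comp_iterate hφ hcob_g] with x hf_lim hg_lim
  exact ⟨hf_lim, hg_lim⟩

/-- Lemma 4.4 of the paper, following Walters. Let `(X, F, μ, f)` be an
invertible measure-preserving transformation of a probability space (with inverse `g`),
and let `φ : X → ℝ` be measurable such that `(φ∘f - φ)⁺` or `(φ∘f - φ)⁻` is integrable.
Then `(1/|n|) φ(fⁿ x) → 0` as `n → +∞` and as `n → -∞`, for `μ`-a.e. `x`. -/
theorem statement15 {X : Type*} [MeasurableSpace X]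
    (μ : MeasureTheory.Measure X) [MeasureTheory.IsProbabilityMeasure μ]
    (f g : X → X) (hf : Measurable f) (hg : Measurable g)
    (hgf : ∀ x, g (f x) = x) (hfg : ∀ x, f (g x) = x)
    (hpres : MeasureTheory.MeasurePreserving f μ μ)
    (φ : X → ℝ) (hφ : Measurable φ)
    (hint : MeasureTheory.Integrable (fun x => max (φ (f x) - φ x) 0) μ ∨
      MeasureTheory.Integrable (fun x => max (φ x - φ (f x)) 0) μ) :
    ∀ᵐ x ∂μ,
      Filter.Tendsto (fun n : ℕ => (n : ℝ)⁻¹ * φ (f^[n] x)) Filter.atTop (nhds 0) ∧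
      Filter.Tendsto (fun n : ℕ => (n : ℝ)⁻¹ * φ (g^[n] x)) Filter.atTop (nhds 0) :=
  statement15_general μ f g hg hgf hfg hpres φ hφ hint
end

section
/- Let (X, F, μ, f) be an invertible measure-preserving transformation of a probability space, let δ > 0, and let ψ : X → [1, ∞) be measurable such that (1/|n|) log ψ(f^n x) → 0 as n → ±∞ for μ-almost every x. Then the function ψ'(x) := sup_{n ∈ ℤ} e^{−|n|δ} ψ(f^n x) is finite μ-almost everywhere, satisfies ψ ≤ ψ', and satisfies ψ'(f x) ≤ e^δ ψ'(x) and ψ'(f^{-1} x) ≤ e^δ ψ'(x) for μ-almost every x. -/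
open MeasureTheory Filter Metric Module Submodule Set

lemma zIter_f_aux {X : Type*} (f g : X → X) (hgf : ∀ x, g (f x) = x) (x : X) (n : ℤ) :
    BY.zIter f g n (f x) = BY.zIter f g (n + 1) x := by
  unfold BY.zIter
  rcases le_or_gt 0 n with h | h
  · rw [if_pos h, if_pos (by omega)]
    rw [show (n + 1).toNat = n.toNat + 1 by omega, Function.iterate_succ_apply]
  · rw [if_neg (by omega)]
    rcases eq_or_lt_of_le (by omega : n + 1 ≤ 0) with h1 | h1
    · rw [if_pos (by omega), show (-n).toNat = 1 by omega, show (n + 1).toNat = 0 by omega]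
      simp [hgf]
    · rw [if_neg (by omega)]
      rw [show (-n).toNat = (-(n + 1)).toNat + 1 by omega, Function.iterate_succ_apply, hgf]

lemma zIter_g_aux {X : Type*} (f g : X → X) (hfg : ∀ x, f (g x) = x) (x : X) (n : ℤ) :
    BY.zIter f g n (g x) = BY.zIter f g (n - 1) x := by
  unfold BY.zIter
  rcases le_or_gt 0 n with h | h
  · rw [if_pos h]
    rcases eq_or_lt_of_le h with h1 | h1
    · rw [if_neg (by omega), show n.toNat = 0 by omega, show (-(n - 1)).toNat = 1 by omega]
      simp
    · rw [if_pos (by omega)]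
      rw [show n.toNat = (n - 1).toNat + 1 by omega, Function.iterate_succ_apply, hfg]
  · rw [if_neg (by omega), if_neg (by omega)]
    rw [show (-(n - 1)).toNat = (-n).toNat + 1 by omega, Function.iterate_succ_apply]

/-- from the proof of Lemma 4.3 of the paper. Let `(X, F, μ, f)` be an
invertible measure-preserving transformation of a probability space (with inverse `g`),
`δ > 0`, and `ψ : X → [1, ∞)` measurable with `(1/|n|) log ψ(fⁿ x) → 0` as `n → ±∞`
`μ`-a.s. Then `ψ'(x) := sup_{n ∈ ℤ} e^{-|n|δ} ψ(fⁿ x)` is finite `μ`-a.e., satisfies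
`ψ ≤ ψ'`, and satisfies `ψ'(f x) ≤ e^δ ψ'(x)` and `ψ'(f⁻¹ x) ≤ e^δ ψ'(x)` `μ`-a.e. -/
theorem statement16 {X : Type*} [MeasurableSpace X]
    (μ : MeasureTheory.Measure X) [MeasureTheory.IsProbabilityMeasure μ]
    (f g : X → X) (hf : Measurable f) (hg : Measurable g)
    (hgf : ∀ x, g (f x) = x) (hfg : ∀ x, f (g x) = x)
    (hpres : MeasureTheory.MeasurePreserving f μ μ)
    (δ : ℝ) (hδ : 0 < δ)
    (ψ : X → ℝ) (hψm : Measurable ψ) (hψ1 : ∀ x, 1 ≤ ψ x)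
    (hlim : ∀ᵐ x ∂μ,
      Filter.Tendsto (fun n : ℕ => (n : ℝ)⁻¹ * Real.log (ψ (f^[n] x)))
        Filter.atTop (nhds 0) ∧
      Filter.Tendsto (fun n : ℕ => (n : ℝ)⁻¹ * Real.log (ψ (g^[n] x)))
        Filter.atTop (nhds 0)) :
    ∀ᵐ x ∂μ,
      BddAbove (Set.range fun n : ℤ =>
        Real.exp (-|(n : ℝ)| * δ) * ψ (BY.zIter f g n x)) ∧
      ψ x ≤ BY.psiSup f g ψ δ x ∧
      BY.psiSup f g ψ δ (f x) ≤ Real.exp δ * BY.psiSup f g ψ δ x ∧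
      BY.psiSup f g ψ δ (g x) ≤ Real.exp δ * BY.psiSup f g ψ δ x := by
  filter_upwards [hlim] with x hx
  have hψpos : ∀ y, (0 : ℝ) < ψ y := fun y => lt_of_lt_of_le one_pos (hψ1 y)
  -- eventual bounds from the limits
  obtain ⟨N₁, hN₁⟩ := (Filter.eventually_atTop).mp
    (hx.1.eventually (eventually_le_nhds hδ))
  obtain ⟨N₂, hN₂⟩ := (Filter.eventually_atTop).mp
    (hx.2.eventually (eventually_le_nhds hδ))
  set N : ℕ := max (max N₁ N₂) 1 with hNdef
  -- the log bound for large |n|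
  have hlog : ∀ n : ℤ, N ≤ n.natAbs →
      Real.log (ψ (BY.zIter f g n x)) ≤ (n.natAbs : ℝ) * δ := by
    intro n hn
    have hm1 : 1 ≤ n.natAbs := le_trans (by omega) hn
    have hmpos : (0 : ℝ) < (n.natAbs : ℝ) := by exact_mod_cast hm1
    have key : ((n.natAbs : ℝ))⁻¹ * Real.log (ψ (BY.zIter f g n x)) ≤ δ := by
      unfold BY.zIter
      rcases le_or_gt 0 n with h | h
      · rw [if_pos h, show n.toNat = n.natAbs by omega]
        exact hN₁ n.natAbs (le_trans (by omega) hn)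
      · rw [if_neg (by omega), show (-n).toNat = n.natAbs by omega]
        exact hN₂ n.natAbs (le_trans (by omega) hn)
    calc Real.log (ψ (BY.zIter f g n x))
        = (n.natAbs : ℝ) * (((n.natAbs : ℝ))⁻¹ * Real.log (ψ (BY.zIter f g n x))) := by
          field_simp
      _ ≤ (n.natAbs : ℝ) * δ := mul_le_mul_of_nonneg_left key hmpos.le
  -- uniform bound
  set C : ℝ := 1 + ∑ m ∈ Finset.Icc (-(N : ℤ)) (N : ℤ), ψ (BY.zIter f g m x) with hC
  have hsum_nonneg : (0 : ℝ) ≤ ∑ m ∈ Finset.Icc (-(N : ℤ)) (N : ℤ), ψ (BY.zIter f g m x) :=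
    Finset.sum_nonneg fun m _ => (hψpos _).le
  have habs : ∀ n : ℤ, |(n : ℝ)| = (n.natAbs : ℝ) := by
    intro n
    rw [← Int.cast_abs, Int.abs_eq_natAbs, Int.cast_natCast]
  have key : ∀ n : ℤ, Real.exp (-|(n : ℝ)| * δ) * ψ (BY.zIter f g n x) ≤ C := by
    intro n
    have hexp1 : Real.exp (-|(n : ℝ)| * δ) ≤ 1 := by
      apply Real.exp_le_one_iff.mpr
      have := abs_nonneg ((n : ℝ))
      nlinarith
    rcases le_or_gt (n.natAbs) N with h | h
    · calc Real.exp (-|(n : ℝ)| * δ) * ψ (BY.zIter f g n x)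
          ≤ 1 * ψ (BY.zIter f g n x) :=
            mul_le_mul_of_nonneg_right hexp1 (hψpos _).le
        _ = ψ (BY.zIter f g n x) := one_mul _
        _ ≤ ∑ m ∈ Finset.Icc (-(N : ℤ)) (N : ℤ), ψ (BY.zIter f g m x) :=
            Finset.single_le_sum (f := fun m : ℤ => ψ (BY.zIter f g m x))
              (fun m _ => (hψpos _).le)
              (Finset.mem_Icc.mpr (by omega))
        _ ≤ C := by rw [hC]; linarith
    · have hlogn := hlog n h.le
      have : Real.exp (-|(n : ℝ)| * δ) * ψ (BY.zIter f g n x) ≤ 1 := by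
        rw [← Real.exp_log (hψpos (BY.zIter f g n x)), ← Real.exp_add]
        apply Real.exp_le_one_iff.mpr
        rw [habs n]
        linarith
      calc Real.exp (-|(n : ℝ)| * δ) * ψ (BY.zIter f g n x) ≤ 1 := this
        _ ≤ C := by rw [hC]; linarith
  have hbdd : BddAbove (Set.range fun n : ℤ =>
      Real.exp (-|(n : ℝ)| * δ) * ψ (BY.zIter f g n x)) := by
    refine ⟨C, ?_⟩
    rintro _ ⟨n, rfl⟩
    exact key n
  refine ⟨hbdd, ?_, ?_, ?_⟩
  · -- ψ x ≤ ψ' x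
    have h0 : ψ x = Real.exp (-|((0 : ℤ) : ℝ)| * δ) * ψ (BY.zIter f g 0 x) := by
      norm_num [BY.zIter]
    rw [h0]
    exact le_csSup hbdd ⟨0, rfl⟩
  · -- ψ'(f x) ≤ e^δ ψ' x
    apply csSup_le (Set.range_nonempty _)
    rintro _ ⟨n, rfl⟩
    dsimp only
    rw [zIter_f_aux f g hgf x n]
    have habs' : |((n : ℤ) : ℝ)| ≥ |(((n + 1 : ℤ)) : ℝ)| - 1 := by
      push_cast
      have h1 : |(n : ℝ) + 1| - |(n : ℝ)| ≤ |((n : ℝ) + 1) - (n : ℝ)| :=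
        abs_sub_abs_le_abs_sub _ _
      have h2 : ((n : ℝ) + 1) - (n : ℝ) = 1 := by ring
      rw [h2] at h1
      simp at h1
      linarith
    have hexp : Real.exp (-|((n : ℤ) : ℝ)| * δ) ≤
        Real.exp δ * Real.exp (-|(((n + 1 : ℤ)) : ℝ)| * δ) := by
      rw [← Real.exp_add]
      apply Real.exp_le_exp.mpr
      nlinarith
    calc Real.exp (-|((n : ℤ) : ℝ)| * δ) * ψ (BY.zIter f g (n + 1) x)
        ≤ (Real.exp δ * Real.exp (-|(((n + 1 : ℤ)) : ℝ)| * δ)) * ψ (BY.zIter f g (n + 1) x) :=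
          mul_le_mul_of_nonneg_right hexp (hψpos _).le
      _ = Real.exp δ * (Real.exp (-|(((n + 1 : ℤ)) : ℝ)| * δ) * ψ (BY.zIter f g (n + 1) x)) := by
          ring
      _ ≤ Real.exp δ * BY.psiSup f g ψ δ x :=
          mul_le_mul_of_nonneg_left (le_csSup hbdd ⟨n + 1, rfl⟩) (Real.exp_pos δ).le
  · -- ψ'(g x) ≤ e^δ ψ' x
    apply csSup_le (Set.range_nonempty _)
    rintro _ ⟨n, rfl⟩
    dsimp only
    rw [zIter_g_aux f g hfg x n]
    have habs' : |((n : ℤ) : ℝ)| ≥ |(((n - 1 : ℤ)) : ℝ)| - 1 := by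
      push_cast
      have h1 : |(n : ℝ) - 1| - |(n : ℝ)| ≤ |((n : ℝ) - 1) - (n : ℝ)| :=
        abs_sub_abs_le_abs_sub _ _
      have h2 : ((n : ℝ) - 1) - (n : ℝ) = -1 := by ring
      rw [h2] at h1
      simp at h1
      linarith
    have hexp : Real.exp (-|((n : ℤ) : ℝ)| * δ) ≤
        Real.exp δ * Real.exp (-|(((n - 1 : ℤ)) : ℝ)| * δ) := by
      rw [← Real.exp_add]
      apply Real.exp_le_exp.mpr
      nlinarith
    calc Real.exp (-|((n : ℤ) : ℝ)| * δ) * ψ (BY.zIter f g (n - 1) x)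
        ≤ (Real.exp δ * Real.exp (-|(((n - 1 : ℤ)) : ℝ)| * δ)) * ψ (BY.zIter f g (n - 1) x) :=
          mul_le_mul_of_nonneg_right hexp (hψpos _).le
      _ = Real.exp δ * (Real.exp (-|(((n - 1 : ℤ)) : ℝ)| * δ) * ψ (BY.zIter f g (n - 1) x)) := by
          ring
      _ ≤ Real.exp δ * BY.psiSup f g ψ δ x :=
          mul_le_mul_of_nonneg_left (le_csSup hbdd ⟨n - 1, rfl⟩) (Real.exp_pos δ).le
end

section
/- Let Z be a compact metric space of finite box-counting dimension; concretely, assume there are constants C > 0 and d ≥ 0 such that for every r ∈ (0, 1], Z admits a finite cover by at most C r^{−(d+1)} balls of radius r. Let T : Z → Z be a homeomorphism, let m be a T-invariant Borel probability measure on Z, and let ρ : Z → (0, 1) be measurable with log ρ ∈ L¹(m). Then there exists a countable Borel partition P of Z with finite entropy, H_m(P) = Σ_{P ∈ P} −m(P) log m(P) < ∞, such that for m-almost every x ∈ Z, the partition element P(x) containing x satisfies P(x) ⊂ B(x, ρ(x)), the ball of radius ρ(x) centered at x. -/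
open MeasureTheory Filter Metric Module Submodule Set

/-! Split `Z` by the integer part `n` of `-log ρ`, and split the `n`-th level set `E_n` along a
cover by `N_n ≤ C e^{(d+1)(n+2)}` balls of radius `e^{-(n+2)}`; every piece on level `n` has
diameter `< 2 e^{-(n+2)} < e^{-(n+1)} < ρ`. Since `-a log a ≤ a c + e^{-c}` for every `c`, the
entropy of the pieces on level `n` is at most `(log N_n + n) m(E_n) + e^{-n}`, and as `log N_n`
is linear in `n`, summing over the levels is controlled by `∫ -log ρ dm < ∞`. -/

open Real Function

theorem Real.negMulLog_le_mul_add_exp_neg {a : ℝ} (ha : 0 ≤ a) (c : ℝ) :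
    negMulLog a ≤ a * c + exp (-c) := by
  have key := negMulLog_le_one_sub_self (mul_nonneg ha (exp_pos c).le)
  rw [negMulLog_mul] at key
  simp only [negMulLog, log_exp] at key ⊢
  have h : exp c * (-a * log a - a * c) ≤ exp c * exp (-c) := by
    rw [← exp_add, add_neg_cancel, exp_zero]
    nlinarith [mul_nonneg ha (exp_pos c).le]
  linarith [le_of_mul_le_mul_left h (exp_pos c)]

theorem Finset.sum_negMulLog_le_of_card_le {ι : Type*} (s : Finset ι) {a : ι → ℝ}
    (ha : ∀ i ∈ s, 0 ≤ a i) {N : ℝ} (hN : 0 < N) (hs : (s.card : ℝ) ≤ N) (t : ℝ) :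
    ∑ i ∈ s, negMulLog (a i) ≤ (log N + t) * ∑ i ∈ s, a i + exp (-t) := by
  have hN_exp : N * exp (-(log N + t)) = exp (-t) := by
    rw [neg_add, exp_add, exp_neg (log N), exp_log hN, mul_inv_cancel_left₀ hN.ne']
  calc ∑ i ∈ s, negMulLog (a i)
      ≤ ∑ i ∈ s, (a i * (log N + t) + exp (-(log N + t))) :=
        Finset.sum_le_sum fun i hi => negMulLog_le_mul_add_exp_neg (ha i hi) _
    _ = (log N + t) * ∑ i ∈ s, a i + s.card * exp (-(log N + t)) := by
        rw [Finset.sum_add_distrib, Finset.sum_const, nsmul_eq_mul, Finset.mul_sum]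
        simp only [mul_comm]
    _ ≤ (log N + t) * ∑ i ∈ s, a i + exp (-t) := by
        rw [← hN_exp]; gcongr

theorem two_mul_exp_lt_exp_add_one (x : ℝ) : 2 * exp x < exp (x + 1) := by
  rw [exp_add]
  nlinarith [exp_pos x, exp_one_gt_d9]

theorem exp_neg_add_one_lt_of_floor_neg_log_eq {y : ℝ} {n : ℕ} (hy : 0 < y)
    (h : ⌊-log y⌋₊ = n) : exp (-(n + 1)) < y := by
  have := Nat.lt_floor_add_one (-log y)
  rw [h] at this
  calc exp (-(n + 1)) < exp (log y) := exp_lt_exp.2 (by linarith)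
    _ = y := exp_log hy

section Measure

variable {α : Type*} [MeasurableSpace α] {μ : Measure α}

theorem summable_add_mul_natCast_mul_measureReal [IsFiniteMeasure μ] {E : ℕ → Set α}
    (hEm : ∀ n, MeasurableSet (E n)) (hEd : Pairwise (Disjoint on E)) {f : α → ℝ}
    (hf : Integrable f μ) (hfE : ∀ n, ∀ x ∈ E n, (n : ℝ) ≤ f x) (a b : ℝ) :
    Summable fun n : ℕ => (a + b * n) * μ.real (E n) := by
  have h_int : Summable fun n => ∫ x in E n, f x ∂μ :=
    (hasSum_integral_iUnion hEm hEd hf.integrableOn).summable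
  have h_nat : Summable fun n : ℕ => n * μ.real (E n) :=
    h_int.of_nonneg_of_le (fun n => by positivity) fun n =>
      setIntegral_ge_of_const_le_real (hEm n) (measure_ne_top μ _) (hfE n) hf.integrableOn
  refine (((summable_measure_toReal (μ := μ) hEm hEd).mul_left a).add (h_nat.mul_left b)).congr
    fun n => ?_
  ring

theorem summable_negMulLog_measureReal_inter [IsProbabilityMeasure μ] {E : ℕ → Set α}
    {V : ℕ → ℕ → Set α} {K : ℕ → ℕ} {N : ℕ → ℝ} (hEm : ∀ n, MeasurableSet (E n))
    (hVm : ∀ n k, MeasurableSet (V n k)) (hVd : ∀ n, Pairwise (Disjoint on V n))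
    (hV : ∀ n, ⋃ k, V n k = univ) (hVK : ∀ n k, K n ≤ k → V n k = ∅) (hN : ∀ n, 0 < N n)
    (hKN : ∀ n, (K n : ℝ) ≤ N n)
    (hsum : Summable fun n : ℕ => (log (N n) + n) * μ.real (E n)) :
    Summable fun p : ℕ × ℕ => negMulLog (μ.real (E p.1 ∩ V p.1 p.2)) := by
  have h_zero : ∀ n k, k ∉ Finset.range (K n) → negMulLog (μ.real (E n ∩ V n k)) = 0 :=
    fun n k hk => by
      rw [hVK n k (not_lt.1 (Finset.mem_range.not.1 hk)), inter_empty, measureReal_empty,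
        negMulLog_zero]
  have h_row : ∀ n, ∑ k ∈ Finset.range (K n), μ.real (E n ∩ V n k) = μ.real (E n) := by
    intro n
    have h_cover : ⋃ k ∈ Finset.range (K n), V n k = univ := by
      refine eq_univ_of_forall fun x => ?_
      obtain ⟨k, hk⟩ := mem_iUnion.1 ((hV n).symm ▸ mem_univ x : x ∈ ⋃ k, V n k)
      refine mem_iUnion₂.2 ⟨k, Finset.mem_range.2 (not_le.1 fun h => ?_), hk⟩
      simp [hVK n k h] at hk
    rw [← measureReal_biUnion_finset (f := fun k => E n ∩ V n k)
      (fun i _ j _ hij => (hVd n hij).mono inter_subset_right inter_subset_right)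
      fun k _ => (hEm n).inter (hVm n k), ← inter_iUnion₂, h_cover, inter_univ]
  have h_row_le : ∀ n, ∑' k, negMulLog (μ.real (E n ∩ V n k)) ≤
      (log (N n) + n) * μ.real (E n) + exp (-n) := by
    intro n
    rw [tsum_eq_sum (h_zero n), ← h_row n]
    exact Finset.sum_negMulLog_le_of_card_le _ (fun k _ => measureReal_nonneg) (hN n)
      (by simpa using hKN n) n
  have h_nonneg : ∀ p : ℕ × ℕ, 0 ≤ negMulLog (μ.real (E p.1 ∩ V p.1 p.2)) :=
    fun p => negMulLog_nonneg measureReal_nonneg measureReal_le_one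
  refine (summable_prod_of_nonneg h_nonneg).2 ⟨fun n => summable_of_ne_finset_zero (h_zero n), ?_⟩
  exact (hsum.add summable_exp_neg_nat).of_nonneg_of_le
    (fun n => tsum_nonneg fun k => h_nonneg (n, k)) h_row_le

end Measure

theorem Finset.exists_partition_of_subset_iUnion_ball {Z : Type*} [PseudoMetricSpace Z]
    [MeasurableSpace Z] [OpensMeasurableSpace Z] {s : Finset Z} {r : ℝ}
    (hs : Set.univ ⊆ ⋃ z ∈ s, ball z r) :
    ∃ V : ℕ → Set Z, (∀ k, MeasurableSet (V k)) ∧ Pairwise (Disjoint on V) ∧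
      (⋃ k, V k) = Set.univ ∧ (∀ k, s.card ≤ k → V k = ∅) ∧
      ∀ k, ∀ x ∈ V k, ∀ y ∈ V k, dist x y < 2 * r := by
  set B : ℕ → Set Z := fun k => ⋃ h : k < s.card, ball (s.equivFin.symm ⟨k, h⟩ : Z) r
  refine ⟨disjointed B, MeasurableSet.disjointed fun k => MeasurableSet.iUnion fun _ =>
    measurableSet_ball, disjoint_disjointed B, ?_, fun k hk => ?_, fun k x hx y hy => ?_⟩
  · rw [iUnion_disjointed]
    refine eq_univ_of_univ_subset (hs.trans (iUnion₂_subset fun z hz => ?_))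
    set k := s.equivFin ⟨z, hz⟩
    exact subset_iUnion_of_subset (k : ℕ) (subset_iUnion_of_subset k.isLt (by simp [k]))
  · exact subset_empty_iff.1 ((disjointed_subset B k).trans (by simp [B, not_lt.2 hk]))
  · obtain ⟨_, hx⟩ := mem_iUnion.1 (disjointed_subset B k hx)
    obtain ⟨_, hy⟩ := mem_iUnion.1 (disjointed_subset B k hy)
    linarith [dist_triangle_right x y (s.equivFin.symm ⟨k, ‹_›⟩ : Z), mem_ball.1 hx, mem_ball.1 hy]

theorem pairwise_disjoint_prod_inter {ι κ : Type*} {α : Type*} {E : ι → Set α}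
    {V : ι → κ → Set α} (hE : Pairwise (Disjoint on E)) (hV : ∀ i, Pairwise (Disjoint on V i)) :
    Pairwise (Disjoint on fun p : ι × κ => E p.1 ∩ V p.1 p.2) := by
  rintro ⟨i, k⟩ ⟨j, l⟩ hne
  by_cases hij : i = j
  · subst hij
    exact (hV i fun hkl => hne (Prod.ext rfl hkl)).mono inter_subset_right inter_subset_right
  · exact (hE hij).mono inter_subset_left inter_subset_left

theorem statement19_general {Z : Type*} [MetricSpace Z]
    [MeasurableSpace Z] [BorelSpace Z]
    (C d : ℝ) (hC : 0 < C)
    (hcover : ∀ r : ℝ, 0 < r → r ≤ 1 → ∃ s : Finset Z,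
      (s.card : ℝ) ≤ C * r ^ (-(d + 1)) ∧
      (Set.univ : Set Z) ⊆ ⋃ z ∈ s, Metric.ball z r)
    (m : MeasureTheory.Measure Z) [MeasureTheory.IsProbabilityMeasure m]
    (ρ : Z → ℝ) (hρm : Measurable ρ) (hρ : ∀ x, ρ x ∈ Set.Ioo (0 : ℝ) 1)
    (hint : MeasureTheory.Integrable (fun x => Real.log (ρ x)) m) :
    ∃ P : ℕ → Set Z,
      (∀ n, MeasurableSet (P n)) ∧
      (∀ i j, i ≠ j → Disjoint (P i) (P j)) ∧
      (⋃ n, P n) = Set.univ ∧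
      Summable (fun n => -((m (P n)).toReal * Real.log ((m (P n)).toReal))) ∧
      ∀ᵐ x ∂m, ∀ n, x ∈ P n → P n ⊆ Metric.ball x (ρ x) := by
  set r : ℕ → ℝ := fun n => exp (-(n + 2))
  have hr : ∀ n, 0 < r n ^ (-(d + 1)) := fun n => rpow_pos_of_pos (exp_pos _) _
  choose s hs_card hs_cover using fun n : ℕ =>
    hcover (r n) (exp_pos _) (exp_le_one_iff.2 (by linarith [n.cast_nonneg (α := ℝ)]))
  choose V hVm hVd hV hVs hV_dist using fun n =>
    (s n).exists_partition_of_subset_iUnion_ball (hs_cover n)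
  set E : ℕ → Set Z := fun n => (fun x => ⌊-log (ρ x)⌋₊) ⁻¹' {n}
  have hEm : ∀ n, MeasurableSet (E n) := fun n =>
    hρm.log.neg.nat_floor (measurableSet_singleton n)
  have hE_le : ∀ n, ∀ x ∈ E n, (n : ℝ) ≤ -log (ρ x) := fun n x hx =>
    hx ▸ Nat.floor_le (neg_nonneg.2 (log_nonpos (hρ x).1.le (hρ x).2.le))
  have hlogN : ∀ n : ℕ, log (C * r n ^ (-(d + 1))) + n = log C + 2 * (d + 1) + (d + 2) * n :=
    fun n => by
      rw [log_mul hC.ne' (hr n).ne', log_rpow (exp_pos _), log_exp]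
      ring
  have h_entropy := summable_negMulLog_measureReal_inter hEm hVm hVd hV hVs
    (fun n => mul_pos hC (hr n)) hs_card
    ((summable_add_mul_natCast_mul_measureReal hEm (pairwise_disjoint_fiber _) hint.neg hE_le
      _ _).congr fun n => by rw [hlogN])
  set Q : ℕ × ℕ → Set Z := fun p => E p.1 ∩ V p.1 p.2
  refine ⟨Q ∘ Nat.pairEquiv.symm, fun i => (hEm _).inter (hVm _ _), fun i j hij =>
    pairwise_disjoint_prod_inter (pairwise_disjoint_fiber _) hVd
      (Nat.pairEquiv.symm.injective.ne hij), ?_,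
    (Nat.pairEquiv.symm.summable_iff.2 h_entropy).congr fun i => neg_mul _ _,
    ae_of_all _ fun x i hx y hy => mem_ball.2 ?_⟩
  · refine (Nat.pairEquiv.symm.surjective.iUnion_comp Q).trans (eq_univ_of_forall fun x => ?_)
    obtain ⟨k, hk⟩ := mem_iUnion.1 ((hV _).symm ▸ mem_univ x : x ∈ ⋃ k, V ⌊-log (ρ x)⌋₊ k)
    exact mem_iUnion.2 ⟨(_, k), rfl, hk⟩
  · calc dist y x < 2 * r (Nat.pairEquiv.symm i).1 := hV_dist _ _ y hy.2 x hx.2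
      _ < exp (-((Nat.pairEquiv.symm i).1 + 2) + 1) := two_mul_exp_lt_exp_add_one _
      _ = exp (-((Nat.pairEquiv.symm i).1 + 1)) := by ring_nf
      _ < ρ x := exp_neg_add_one_lt_of_floor_neg_log_eq (hρ x).1 hx.1

/-- Lemma 6.13 of the paper, following Mañé. Let `Z` be a compact metric
space of finite box-counting dimension: there are `C > 0`, `d ≥ 0` such that for every
`r ∈ (0, 1]`, `Z` admits a finite cover by at most `C r^{-(d+1)}` balls of radius `r`.
Let `T : Z → Z` be a homeomorphism, `m` a `T`-invariant Borel probability measure, and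
`ρ : Z → (0, 1)` measurable with `log ρ ∈ L¹(m)`. Then there is a countable Borel
partition `P` of `Z` with finite entropy such that for `m`-a.e. `x`, `P(x) ⊆ B(x, ρ(x))`. -/
theorem statement19 {Z : Type*} [MetricSpace Z] [CompactSpace Z]
    [MeasurableSpace Z] [BorelSpace Z]
    (C d : ℝ) (hC : 0 < C) (hd : 0 ≤ d)
    (hcover : ∀ r : ℝ, 0 < r → r ≤ 1 → ∃ s : Finset Z,
      (s.card : ℝ) ≤ C * r ^ (-(d + 1)) ∧
      (Set.univ : Set Z) ⊆ ⋃ z ∈ s, Metric.ball z r)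
    (T : Z ≃ₜ Z)
    (m : MeasureTheory.Measure Z) [MeasureTheory.IsProbabilityMeasure m]
    (hpres : MeasureTheory.MeasurePreserving T m m)
    (ρ : Z → ℝ) (hρm : Measurable ρ) (hρ : ∀ x, ρ x ∈ Set.Ioo (0 : ℝ) 1)
    (hint : MeasureTheory.Integrable (fun x => Real.log (ρ x)) m) :
    ∃ P : ℕ → Set Z,
      (∀ n, MeasurableSet (P n)) ∧
      (∀ i j, i ≠ j → Disjoint (P i) (P j)) ∧
      (⋃ n, P n) = Set.univ ∧
      Summable (fun n => -((m (P n)).toReal * Real.log ((m (P n)).toReal))) ∧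
      ∀ᵐ x ∂m, ∀ n, x ∈ P n → P n ⊆ Metric.ball x (ρ x) :=
  statement19_general C d hC hcover m ρ hρm hρ hint
end
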